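/- arXiv:2310.05903 — 8 statements merged into one kernel-verified Lean document; each statement's English description precedes it below -/
import Mathlib

section
/- Let G be a minimal non flat path extendable (MNFPE) graph and let P be a witness path for G. Then every nearly simplicial vertex of G lies in N[P]. -/
open Classical

universe u

/-- `IsHoleOn G n H`: `H` is the vertex set of an induced cycle of `G` of length `n ≥ 4`. -/
def IsHoleOn {V : Type u} (G : SimpleGraph V) (n : ℕ) (H : Set V) : Prop :=
  4 ≤ n ∧ ∃ f : ZMod n → V, Function.Injective f ∧ Set.range f = H ∧
    ∀ i j : ZMod n, G.Adj (f i) (f j) ↔ (j = i + 1 ∨ i = j + 1)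

/-- A hole: an induced cycle of length at least 4. -/
def IsHole {V : Type u} (G : SimpleGraph V) (H : Set V) : Prop :=
  ∃ n : ℕ, IsHoleOn G n H

/-- No induced cycle of even length. -/
def EvenHoleFree {V : Type u} (G : SimpleGraph V) : Prop :=
  ∀ (n : ℕ) (H : Set V), IsHoleOn G n H → ¬ Even n

/-- `G[X]` is chordal: no hole of `G` is contained in `X`. -/
def ChordalSet {V : Type u} (G : SimpleGraph V) (X : Set V) : Prop :=
  ∀ H : Set V, H ⊆ X → ¬ IsHole G H

/-- A wheel `(H, w)`: a hole `H` and `w ∉ H` with at least 3 neighbors in `H`. -/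
def IsWheel {V : Type u} (G : SimpleGraph V) (H : Set V) (w : V) : Prop :=
  IsHole G H ∧ w ∉ H ∧ 3 ≤ (H ∩ {u | G.Adj w u}).ncard

/-- An induced path of `G`, recorded as the list of its vertices in order. -/
def IsInducedPathList {V : Type u} (G : SimpleGraph V) (l : List V) : Prop :=
  l ≠ [] ∧ l.Nodup ∧
    ∀ (i j : ℕ) (hi : i < l.length) (hj : j < l.length),
      G.Adj (l.get ⟨i, hi⟩) (l.get ⟨j, hj⟩) ↔ (i + 1 = j ∨ j + 1 = i)

/-- A vertex set that induces a path. -/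
def InducesPath {V : Type u} (G : SimpleGraph V) (S : Set V) : Prop :=
  ∃ l : List V, IsInducedPathList G l ∧ {v | v ∈ l} = S

/-- A sector wheel: a wheel `(H, w)` where `w` is complete to `H` or
`N(w) ∩ H` induces a path. -/
def IsSectorWheel {V : Type u} (G : SimpleGraph V) (H : Set V) (w : V) : Prop :=
  IsWheel G H w ∧
    ((∀ u ∈ H, G.Adj w u) ∨ InducesPath G (H ∩ {u | G.Adj w u}))

/-- A twin wheel: a wheel `(H, w)` where `N(w) ∩ H` induces a three-vertex path. -/
def IsTwinWheel {V : Type u} (G : SimpleGraph V) (H : Set V) (w : V) : Prop :=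
  IsWheel G H w ∧ ∃ a b c : V, a ≠ b ∧ b ≠ c ∧ a ≠ c ∧
    H ∩ {u | G.Adj w u} = {a, b, c} ∧ G.Adj a b ∧ G.Adj b c ∧ ¬ G.Adj a c

/-- A short pyramid: a wheel `(H, w)` where `N(w) ∩ H` is an edge plus an isolated vertex. -/
def IsShortPyramid {V : Type u} (G : SimpleGraph V) (H : Set V) (w : V) : Prop :=
  IsWheel G H w ∧ ∃ a b c : V, a ≠ b ∧ b ≠ c ∧ a ≠ c ∧
    H ∩ {u | G.Adj w u} = {a, b, c} ∧ G.Adj a b ∧ ¬ G.Adj a c ∧ ¬ G.Adj b c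

/-- A flat path: an induced path all of whose interior vertices have degree 2 in `G`. -/
def IsFlatPath {V : Type u} (G : SimpleGraph V) (l : List V) : Prop :=
  IsInducedPathList G l ∧
    ∀ (i : ℕ) (hi : i < l.length), 0 < i → i + 1 < l.length →
      ({u | G.Adj (l.get ⟨i, hi⟩) u}).ncard = 2

/-- The closed neighborhood `N[S]` of a set of vertices. -/
def ClosedNbhd {V : Type u} (G : SimpleGraph V) (S : Set V) : Set V :=
  S ∪ {v | ∃ s ∈ S, G.Adj v s}

/-- `(W1, W2)` (a precover on a path with vertex set `S`) extends to a chordal cover of `G`. -/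
def ExtendsToCover {V : Type u} (G : SimpleGraph V) (S W1 W2 : Set V) : Prop :=
  ∃ X1 X2 : Set V, W1 ⊆ X1 ∧ W2 ⊆ X2 ∧ ChordalSet G X1 ∧ ChordalSet G X2 ∧
    X1 ∩ X2 = S ∧ X1 ∪ X2 = Set.univ

/-- Flat path extendable. -/
def FPE {V : Type u} (G : SimpleGraph V) : Prop :=
  ∀ l : List V, IsFlatPath G l →
    ∀ W1 W2 : Set V, ChordalSet G W1 → ChordalSet G W2 →
      W1 ∩ W2 = {v | v ∈ l} → W1 ∪ W2 = ClosedNbhd G {v | v ∈ l} →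
      ExtendsToCover G {v | v ∈ l} W1 W2

/-- Weakly flat path extendable: only paths with at most two vertices are considered. -/
def WeaklyFPE {V : Type u} (G : SimpleGraph V) : Prop :=
  ∀ l : List V, IsInducedPathList G l → l.length ≤ 2 →
    ∀ W1 W2 : Set V, ChordalSet G W1 → ChordalSet G W2 →
      W1 ∩ W2 = {v | v ∈ l} → W1 ∪ W2 = ClosedNbhd G {v | v ∈ l} →
      ExtendsToCover G {v | v ∈ l} W1 W2

/-- Minimal non flat path extendable. -/
def MNFPE {V : Type u} (G : SimpleGraph V) : Prop :=
  ¬ FPE G ∧ ∀ S : Set V, S ≠ Set.univ → FPE (G.induce S)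

/-- Minimal non-weakly flat path extendable. -/
def MinNonWeaklyFPE {V : Type u} (G : SimpleGraph V) : Prop :=
  ¬ WeaklyFPE G ∧ ∀ S : Set V, S ≠ Set.univ → WeaklyFPE (G.induce S)

/-- A witness path `l` with witness sets `W1, W2`: a precover on a flat path
admitting no extension to a chordal cover. -/
def WitnessPath {V : Type u} (G : SimpleGraph V) (l : List V) (W1 W2 : Set V) : Prop :=
  IsFlatPath G l ∧ ChordalSet G W1 ∧ ChordalSet G W2 ∧
    W1 ∩ W2 = {v | v ∈ l} ∧ W1 ∪ W2 = ClosedNbhd G {v | v ∈ l} ∧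
    ¬ ExtendsToCover G {v | v ∈ l} W1 W2

/-- A witness path of length zero or one with witness sets, for the weak notion. -/
def WeakWitness {V : Type u} (G : SimpleGraph V) (l : List V) (W1 W2 : Set V) : Prop :=
  IsInducedPathList G l ∧ l.length ≤ 2 ∧ ChordalSet G W1 ∧ ChordalSet G W2 ∧
    W1 ∩ W2 = {v | v ∈ l} ∧ W1 ∪ W2 = ClosedNbhd G {v | v ∈ l} ∧
    ¬ ExtendsToCover G {v | v ∈ l} W1 W2

/-- `N(v)` is the union of a clique and a singleton. -/
def NearlySimplicial {V : Type u} (G : SimpleGraph V) (v : V) : Prop :=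
  ∃ (K : Set V) (u : V), G.IsClique K ∧ {w | G.Adj v w} = K ∪ {u}

/-- `G` has a star cutset. -/
def HasStarCutset {V : Type u} (G : SimpleGraph V) : Prop :=
  G.Connected ∧ ∃ (v : V) (C : Set V), v ∈ C ∧ C ⊆ insert v {u | G.Adj v u} ∧
    ¬ (G.induce (Cᶜ : Set V)).Connected

/-- `v` is the center of a star cutset of `G`. -/
def IsStarCutsetCenter {V : Type u} (G : SimpleGraph V) (v : V) : Prop :=
  G.Connected ∧ ∃ C : Set V, v ∈ C ∧ C ⊆ insert v {u | G.Adj v u} ∧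
    ¬ (G.induce (Cᶜ : Set V)).Connected

/-- `G` has a full star cutset, i.e. a star cutset of the form `N[v]`. -/
def HasFullStarCutset {V : Type u} (G : SimpleGraph V) : Prop :=
  G.Connected ∧ ∃ v : V,
    ¬ (G.induce (((insert v {u | G.Adj v u}) : Set V)ᶜ)).Connected

/-- A clique cutset. -/
def IsCliqueCutset {V : Type u} (G : SimpleGraph V) (Q : Set V) : Prop :=
  G.IsClique Q ∧ ¬ (G.induce (Qᶜ : Set V)).Connected

/-- `C` is (the vertex set of) a connected component of `G[S]`. -/
def IsCompOf {V : Type u} (G : SimpleGraph V) (S C : Set V) : Prop :=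
  ∃ comp : (G.induce S).ConnectedComponent, C = Subtype.val '' comp.supp

/-- A marker path for the side `(A, C, B)` of a 2-join, with ends `a ∈ A` and `b ∈ B`
and interior in `C`. -/
def IsMarkerPath {V : Type u} (G : SimpleGraph V) (A C B : Set V) (a b : V)
    (l : List V) : Prop :=
  IsInducedPathList G l ∧ a ∈ A ∧ b ∈ B ∧
    ∃ m : List V, l = a :: (m ++ [b]) ∧ ∀ v ∈ m, v ∈ C

/-- A 2-join of `G`. -/
def IsTwoJoin {V : Type u} (G : SimpleGraph V) (A1 C1 B1 A2 C2 B2 : Set V) : Prop :=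
  ([A1, C1, B1, A2, C2, B2] : List (Set V)).Pairwise Disjoint ∧
  A1 ∪ C1 ∪ B1 ∪ A2 ∪ C2 ∪ B2 = Set.univ ∧
  (∀ a ∈ A1, ∀ b ∈ A2, G.Adj a b) ∧
  (∀ a ∈ B1, ∀ b ∈ B2, G.Adj a b) ∧
  (∀ u ∈ A1 ∪ C1 ∪ B1, ∀ v ∈ A2 ∪ C2 ∪ B2, G.Adj u v →
    ((u ∈ A1 ∧ v ∈ A2) ∨ (u ∈ B1 ∧ v ∈ B2))) ∧
  (∃ (a b : V) (l : List V), IsMarkerPath G A1 C1 B1 a b l ∧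
      A1 ∪ C1 ∪ B1 ≠ {v | v ∈ l}) ∧
  (∃ (a b : V) (l : List V), IsMarkerPath G A2 C2 B2 a b l ∧
      A2 ∪ C2 ∪ B2 ≠ {v | v ∈ l})

/-- A leaf of a graph: a vertex of degree one. -/
def IsLeaf {V : Type u} (T : SimpleGraph V) (v : V) : Prop :=
  ({u | T.Adj v u}).ncard = 1

/-- The graph `B(T)` built from a tree `T` whose bipartition is given by the proper
2-coloring `c`: vertices are the edges of `T` plus two extra vertices `x_false, x_true`
(encoded as `Bool`); two edges are adjacent iff they share an endpoint, `x_i` is adjacent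
to the pendant edge at each leaf on side `i`, and `x_false` is adjacent to `x_true`. -/
def BGraph {V : Type u} (T : SimpleGraph V) (c : V → Bool) :
    SimpleGraph (↥T.edgeSet ⊕ Bool) :=
  SimpleGraph.fromRel fun a b =>
    match a, b with
    | Sum.inl e, Sum.inl f => ∃ v : V, v ∈ e.val ∧ v ∈ f.val
    | Sum.inl e, Sum.inr i => ∃ v : V, IsLeaf T v ∧ c v = i ∧ v ∈ e.val
    | Sum.inr _, Sum.inl _ => False
    | Sum.inr _, Sum.inr _ => True

/-! Suppose a nearly simplicial vertex `v`, with `N(v) = K ∪ {u}` for a clique `K`, lies outside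
`N[P]`. Then the precover `(P, W1, W2)` is also a precover of `G - v`, which is flat path extendable
by minimality, so it extends to a chordal cover `(Y1, Y2)` of `G - v`. Since `u ∉ P`, `u` misses one
side, say `Y2`. Every hole through `v` passes through two non-adjacent neighbours of `v`, which
cannot both lie in the clique `K`, so it passes through `u`; hence `Y2 ∪ {v}` is still chordal and
`(Y1, Y2 ∪ {v})` extends the precover in `G`, a contradiction. -/

open SimpleGraph

section Holes

variable {V W : Type*} {G : SimpleGraph V} {G' : SimpleGraph W} {n : ℕ}

theorem IsHoleOn.image (φ : G' ↪g G) {H : Set W} (h : IsHoleOn G' n H) :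
    IsHoleOn G n (φ '' H) := by
  obtain ⟨hn, f, hf, rfl, hadj⟩ := h
  exact ⟨hn, φ ∘ f, φ.injective.comp hf, Set.range_comp _ _,
    fun i j => (φ.map_adj_iff).trans (hadj i j)⟩

theorem IsHoleOn.exists_image_eq (φ : G' ↪g G) {H : Set V} (hH : H ⊆ Set.range φ)
    (h : IsHoleOn G n H) : ∃ H' : Set W, φ '' H' = H ∧ IsHoleOn G' n H' := by
  obtain ⟨hn, f, hf, rfl, hadj⟩ := h
  choose g hg using fun i => hH (Set.mem_range_self i)
  refine ⟨Set.range g, ?_, hn, g, fun i j hij => hf ?_, rfl, fun i j => ?_⟩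
  · rw [← Set.range_comp]
    exact congrArg Set.range (funext hg)
  · rw [← hg i, ← hg j, hij]
  · rw [← hadj, ← hg i, ← hg j, φ.map_adj_iff]

theorem ChordalSet.preimage (φ : G' ↪g G) {X : Set V} (hX : ChordalSet G X) :
    ChordalSet G' (φ ⁻¹' X) := fun _ hH ⟨n, hn⟩ =>
  hX _ (Set.image_subset_iff.mpr hH) ⟨n, hn.image φ⟩

theorem ChordalSet.image (φ : G' ↪g G) {X : Set W} (hX : ChordalSet G' X) :
    ChordalSet G (φ '' X) := by
  rintro H hH ⟨n, hn⟩
  obtain ⟨H', rfl, hn'⟩ := hn.exists_image_eq φ (hH.trans (Set.image_subset_range _ _))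
  exact hX H' ((Set.image_subset_image_iff φ.injective).mp hH) ⟨n, hn'⟩

theorem IsHoleOn.exists_nonadj_neighbors {H : Set V} {v : V} (h : IsHoleOn G n H)
    (hv : v ∈ H) : ∃ a ∈ H, ∃ b ∈ H, G.Adj v a ∧ G.Adj v b ∧ a ≠ b ∧ ¬ G.Adj a b := by
  obtain ⟨hn, f, hf, rfl, hadj⟩ := h
  obtain ⟨k, rfl⟩ := hv
  have hne_zero : ∀ m : ℕ, 0 < m → m < n → (m : ZMod n) ≠ 0 := fun m h0 hm hm0 => by
    rw [ZMod.natCast_eq_zero_iff] at hm0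
    exact absurd (Nat.le_of_dvd h0 hm0) (by omega)
  refine ⟨f (k - 1), ⟨_, rfl⟩, f (k + 1), ⟨_, rfl⟩, (hadj _ _).2 (Or.inr (by ring)),
    (hadj _ _).2 (Or.inl rfl), fun heq => hne_zero 2 two_pos (by omega) ?_, ?_⟩
  · push_cast
    linear_combination -hf heq
  · rw [hadj]
    rintro (heq | heq)
    · exact hne_zero 1 one_pos (by omega) (by push_cast; linear_combination heq)
    · exact hne_zero 3 three_pos (by omega) (by push_cast; linear_combination -heq)

theorem ChordalSet.insert_of_neighborSet_eq {X K : Set V} {v u : V} (hX : ChordalSet G X)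
    (hK : G.IsClique K) (hN : {w | G.Adj v w} = K ∪ {u}) (hu : u ∉ X) :
    ChordalSet G (insert v X) := by
  rintro H hH ⟨n, hn⟩
  by_cases hvH : v ∈ H
  · obtain ⟨a, ha, b, hb, hva, hvb, hab, hnab⟩ := hn.exists_nonadj_neighbors hvH
    have huH : u ∈ H := by
      rcases (hN ▸ hva : a ∈ K ∪ {u}) with haK | rfl
      · rcases (hN ▸ hvb : b ∈ K ∪ {u}) with hbK | rfl
        · exact absurd (hK haK hbK hab) hnab
        · exact hb
      · exact ha
    have hvu : G.Adj v u := (Set.ext_iff.mp hN u).2 (Or.inr rfl)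
    rcases hH huH with rfl | huX
    · exact hvu.ne rfl
    · exact hu huX
  · exact hX H (fun x hx => (hH hx).resolve_left (by rintro rfl; exact hvH hx)) ⟨n, hn⟩

end Holes

section Covers

variable {V : Type*} {G : SimpleGraph V}

theorem ExtendsToCover.symm {S W1 W2 : Set V} (h : ExtendsToCover G S W1 W2) :
    ExtendsToCover G S W2 W1 := by
  obtain ⟨X1, X2, h1, h2, c1, c2, hi, hu⟩ := h
  exact ⟨X2, X1, h2, h1, c2, c1, Set.inter_comm X2 X1 ▸ hi, Set.union_comm X2 X1 ▸ hu⟩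

theorem extendsToCover_of_cover_compl_singleton {S W1 W2 Y1 Y2 K : Set V} {v u : V}
    (hK : G.IsClique K) (hN : {w | G.Adj v w} = K ∪ {u}) (hu : u ∉ S)
    (h1 : W1 ⊆ Y1) (h2 : W2 ⊆ Y2) (c1 : ChordalSet G Y1) (c2 : ChordalSet G Y2)
    (hi : Y1 ∩ Y2 = S) (hun : Y1 ∪ Y2 = {v}ᶜ) : ExtendsToCover G S W1 W2 := by
  wlog hu2 : u ∉ Y2 generalizing W1 W2 Y1 Y2
  · have hu1 : u ∉ Y1 := fun hu1 => hu (hi ▸ ⟨hu1, not_not.mp hu2⟩)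
    exact (this h2 h1 c2 c1 (by rwa [Set.inter_comm]) (by rwa [Set.union_comm]) hu1).symm
  have hv1 : v ∉ Y1 := fun hv1 => (hun ▸ Or.inl hv1 : v ∈ ({v}ᶜ : Set V)) rfl
  refine ⟨Y1, insert v Y2, h1, h2.trans (Set.subset_insert _ _), c1,
    c2.insert_of_neighborSet_eq hK hN hu2, ?_, ?_⟩
  · rw [Set.inter_insert_of_notMem hv1, hi]
  · rw [Set.union_insert, hun, ← Set.singleton_union, Set.union_compl_self]

end Covers

section Restrict

variable {V : Type*} {G : SimpleGraph V} {S : Set V}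

theorem closedNbhd_induce_preimage_val {T : Set V} (hT : T ⊆ S) :
    ClosedNbhd (G.induce S) (Subtype.val ⁻¹' T) = Subtype.val ⁻¹' ClosedNbhd G T := by
  ext x
  simp only [ClosedNbhd, Set.mem_union, Set.mem_preimage, Set.mem_ofPred_eq, comap_adj,
    Function.Embedding.subtype_apply, Subtype.exists, exists_prop]
  exact or_congr_right ⟨fun ⟨s, _, hs, hxs⟩ => ⟨s, hs, hxs⟩,
    fun ⟨s, hs, hxs⟩ => ⟨s, hT hs, hs, hxs⟩⟩

theorem ncard_setOf_induce_adj {x : S} (hx : ∀ w, G.Adj x w → w ∈ S) :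
    {w : S | (G.induce S).Adj x w}.ncard = {w | G.Adj x w}.ncard := by
  rw [← Set.ncard_image_of_injective _ Subtype.val_injective]
  congr 1
  ext w
  exact ⟨fun ⟨w', hw', hw⟩ => hw ▸ hw', fun hw => ⟨⟨w, hx w hw⟩, hw, rfl⟩⟩

theorem setOf_mem_pmap_subtype_mk {l : List V} (hS : ∀ x ∈ l, x ∈ S) :
    {x | x ∈ l.pmap Subtype.mk hS} = Subtype.val ⁻¹' {x | x ∈ l} := by
  ext ⟨x, hx⟩
  simp [List.mem_pmap]

theorem IsInducedPathList.pmap_induce {l : List V} (hl : IsInducedPathList G l)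
    (hS : ∀ x ∈ l, x ∈ S) : IsInducedPathList (G.induce S) (l.pmap Subtype.mk hS) := by
  obtain ⟨hne, hnd, hadj⟩ := hl
  refine ⟨by simpa using hne, hnd.pmap fun _ _ _ _ h => congrArg Subtype.val h, ?_⟩
  intro i j hi hj
  simpa using hadj i j (by simpa using hi) (by simpa using hj)

theorem IsFlatPath.pmap_induce {l : List V} (hl : IsFlatPath G l)
    (hS : ClosedNbhd G {x | x ∈ l} ⊆ S) :
    IsFlatPath (G.induce S) (l.pmap Subtype.mk fun _ hx => hS (Or.inl hx)) := by
  refine ⟨hl.1.pmap_induce _, fun i hi h0 hlast => ?_⟩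
  have hi' : i < l.length := by simpa using hi
  rw [← hl.2 i hi' h0 (by simpa using hlast), List.get_eq_getElem, List.getElem_pmap]
  exact ncard_setOf_induce_adj fun w hw => hS (Or.inr ⟨_, List.getElem_mem hi', hw.symm⟩)

theorem exists_chordal_cover_of_fpe_induce (hFPE : FPE (G.induce S)) {l : List V}
    {W1 W2 : Set V} (hl : IsFlatPath G l) (c1 : ChordalSet G W1) (c2 : ChordalSet G W2)
    (hi : W1 ∩ W2 = {x | x ∈ l}) (hu : W1 ∪ W2 = ClosedNbhd G {x | x ∈ l})
    (hS : ClosedNbhd G {x | x ∈ l} ⊆ S) :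
    ∃ Y1 Y2 : Set V, W1 ⊆ Y1 ∧ W2 ⊆ Y2 ∧ ChordalSet G Y1 ∧ ChordalSet G Y2 ∧
      Y1 ∩ Y2 = {x | x ∈ l} ∧ Y1 ∪ Y2 = S := by
  have hLS : {x | x ∈ l} ⊆ S := Set.subset_union_left.trans hS
  have hW1S : W1 ⊆ S := (hu ▸ Set.subset_union_left).trans hS
  have hW2S : W2 ⊆ S := (hu ▸ Set.subset_union_right).trans hS
  have hL := setOf_mem_pmap_subtype_mk (S := S) fun _ hx => hS (Or.inl hx)
  obtain ⟨X1, X2, h1, h2, cX1, cX2, hXi, hXu⟩ := hFPE _ (hl.pmap_induce hS)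
    (Subtype.val ⁻¹' W1) (Subtype.val ⁻¹' W2) (c1.preimage (Embedding.induce S))
    (c2.preimage (Embedding.induce S)) (by rw [hL, ← Set.preimage_inter, hi])
    (by rw [hL, closedNbhd_induce_preimage_val hLS, ← Set.preimage_union, hu])
  refine ⟨Subtype.val '' X1, Subtype.val '' X2, fun x hx => ⟨⟨x, hW1S hx⟩, h1 hx, rfl⟩,
    fun x hx => ⟨⟨x, hW2S hx⟩, h2 hx, rfl⟩, cX1.image (Embedding.induce S),
    cX2.image (Embedding.induce S), ?_, ?_⟩
  · rw [← Set.image_inter Subtype.val_injective, hXi, hL, Subtype.image_preimage_coe,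
      Set.inter_eq_right.mpr hLS]
  · rw [← Set.image_union, hXu, Set.image_univ, Subtype.range_coe]

end Restrict

theorem stmt3_general {V : Type u} (G : SimpleGraph V) (hG : MNFPE G)
    (l : List V) (W1 W2 : Set V) (hW : WitnessPath G l W1 W2)
    (v : V) (hv : NearlySimplicial G v) :
    v ∈ ClosedNbhd G {x | x ∈ l} := by
  by_contra hvP
  obtain ⟨K, u, hK, hN⟩ := hv
  obtain ⟨hl, c1, c2, hi, hu, hnoext⟩ := hW
  have hsub : ClosedNbhd G {x | x ∈ l} ⊆ {v}ᶜ := fun x hx (hxv : x = v) => hvP (hxv ▸ hx)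
  have huP : u ∉ {x | x ∈ l} := fun hul =>
    hvP (Or.inr ⟨u, hul, (Set.ext_iff.mp hN u).2 (Or.inr rfl)⟩)
  obtain ⟨Y1, Y2, h1, h2, cY1, cY2, hYi, hYu⟩ := exists_chordal_cover_of_fpe_induce
    (hG.2 _ (Set.compl_ne_univ.mpr (Set.singleton_nonempty v))) hl c1 c2 hi hu hsub
  exact hnoext (extendsToCover_of_cover_compl_singleton hK hN huP h1 h2 cY1 cY2 hYi hYu)

/-- If `G` is MNFPE and `l` is a witness path for `G`, then every nearly simplicial
vertex of `G` lies in `N[l]`. -/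
theorem stmt3 {V : Type u} [Finite V] (G : SimpleGraph V) (hG : MNFPE G)
    (l : List V) (W1 W2 : Set V) (hW : WitnessPath G l W1 W2)
    (v : V) (hv : NearlySimplicial G v) :
    v ∈ ClosedNbhd G {x | x ∈ l} :=
  stmt3_general G hG l W1 W2 hW v hv
end

section
/- Let G = B(T) be an extended nontrivial basic graph. If the tree T has two leaves with a common neighbor, then B(T) has a star cutset. -/
open Classical

universe u

lemma bgr_of_mem {V : Type u} {T : SimpleGraph V} {c : V → Bool}
    {a : V} {e f : T.edgeSet} (he : a ∈ e.val) (hf : a ∈ f.val) :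
    (BGraph T c).Reachable (Sum.inl e) (Sum.inl f) := by
  by_cases h : e = f
  · subst h; exact SimpleGraph.Reachable.refl _
  · refine SimpleGraph.Adj.reachable ?_
    rw [BGraph, SimpleGraph.fromRel_adj]
    exact ⟨by simpa using h, Or.inl ⟨a, he, hf⟩⟩

lemma bgr_walk {V : Type u} {T : SimpleGraph V} {c : V → Bool} :
    ∀ {a b : V} (_ : T.Walk a b) (e f : T.edgeSet), a ∈ e.val → b ∈ f.val →
      (BGraph T c).Reachable (Sum.inl e) (Sum.inl f) := by
  intro a b w
  induction w with
  | nil => intro e f he hf; exact bgr_of_mem he hf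
  | @cons x y z h p ih =>
    intro e f he hf
    exact (bgr_of_mem (f := ⟨s(x,y), h⟩) he (by simp)).trans
      (ih ⟨s(x,y), h⟩ f (by simp) hf)

lemma bgr_connected {V : Type u} {T : SimpleGraph V} {c : V → Bool}
    (hT : T.Connected) {t : V} (ht : IsLeaf T t) {s : V} (hs : T.Adj s t) :
    (BGraph T c).Connected := by
  have key : ∀ x, (BGraph T c).Reachable x (Sum.inr (c t)) := by
    intro x
    match x with
    | Sum.inr i =>
      by_cases h : i = c t
      · subst h; exact SimpleGraph.Reachable.refl _
      · refine SimpleGraph.Adj.reachable ?_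
        rw [BGraph, SimpleGraph.fromRel_adj]
        exact ⟨by simpa using h, Or.inl trivial⟩
    | Sum.inl e =>
      obtain ⟨z, hz⟩ := e
      revert hz
      induction z using Sym2.ind with
      | _ a b =>
        intro hz
        obtain ⟨w⟩ := hT.preconnected a t
        refine (bgr_walk w ⟨s(a,b), hz⟩ ⟨s(s,t), hs⟩ (by simp) (by simp)).trans
          (SimpleGraph.Adj.reachable ?_)
        rw [BGraph, SimpleGraph.fromRel_adj]
        exact ⟨by simp, Or.inl ⟨t, ht, rfl, by simp⟩⟩
  rw [SimpleGraph.connected_iff]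
  exact ⟨fun x y => (key x).trans (key y).symm, ⟨Sum.inr true⟩⟩

/-- If `B(T)` is an extended nontrivial basic graph and the tree `T` has two leaves with a
common neighbor, then `B(T)` has a star cutset. -/
theorem stmt4 {W : Type u} [Finite W] (T : SimpleGraph W) (hT : T.IsTree)
    (c : W → Bool) (hc : ∀ u v : W, T.Adj u v → c u ≠ c v)
    (hleaves : 3 ≤ ({v | IsLeaf T v} : Set W).ncard)
    (hnonleaves : 2 ≤ ({v | ¬ IsLeaf T v} : Set W).ncard)
    (t1 t2 u : W) (hne : t1 ≠ t2) (h1 : IsLeaf T t1) (h2 : IsLeaf T t2)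
    (hu1 : T.Adj u t1) (hu2 : T.Adj u t2) :
    HasStarCutset (BGraph T c) := by
  classical
  have hut1 : u ≠ t1 := T.ne_of_adj hu1
  have hut2 : u ≠ t2 := T.ne_of_adj hu2
  set e1 : T.edgeSet := ⟨s(u, t1), T.mem_edgeSet.mpr hu1⟩ with he1def
  set e2 : T.edgeSet := ⟨s(u, t2), T.mem_edgeSet.mpr hu2⟩ with he2def
  have hcc : c t1 = c t2 := by
    have h1' := hc u t1 hu1
    have h2' := hc u t2 hu2
    cases hcu : c u <;> cases h3 : c t1 <;> cases h4 : c t2 <;> simp_all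
  have hnleaf : ¬ IsLeaf T u := by
    intro h
    obtain ⟨a, ha⟩ := Set.ncard_eq_one.mp h
    have m1 : t1 ∈ {w | T.Adj u w} := hu1
    have m2 : t2 ∈ {w | T.Adj u w} := hu2
    rw [ha] at m1 m2
    simp only [Set.mem_singleton_iff] at m1 m2
    exact hne (m1.trans m2.symm)
  have ht2only : ∀ w : W, T.Adj t2 w → w = u := by
    intro w hw
    obtain ⟨a, ha⟩ := Set.ncard_eq_one.mp h2
    have m1 : w ∈ {x | T.Adj t2 x} := hw
    have m2 : u ∈ {x | T.Adj t2 x} := hu2.symm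
    rw [ha] at m1 m2
    simp only [Set.mem_singleton_iff] at m1 m2
    exact m1.trans m2.symm
  have hft2 : ∀ f : T.edgeSet, t2 ∈ f.val → f = e2 := by
    rintro ⟨z, hz⟩ hm
    revert hz hm
    induction z using Sym2.ind with
    | _ a b =>
      intro hz hm
      apply Subtype.ext
      simp only [Sym2.mem_iff] at hm
      rcases hm with rfl | rfl
      · have hb : b = u := ht2only b hz
        subst hb
        exact Sym2.eq_swap
      · have ha' : a = u := ht2only a hz.symm
        subst ha'
        rfl
  have he12 : e1 ≠ e2 := by
    intro h
    have hval := congrArg Subtype.val h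
    simp only [he1def, he2def, Sym2.eq_iff] at hval
    rcases hval with ⟨-, h'⟩ | ⟨h', -⟩
    · exact hne h'
    · exact hut2 h'
  -- every neighbor of inl e2 is in the closed star of inl e1
  have hnbr : ∀ x, (BGraph T c).Adj (Sum.inl e2) x →
      x ∈ insert (Sum.inl e1) {y | (BGraph T c).Adj (Sum.inl e1) y} := by
    intro x hx
    rw [BGraph, SimpleGraph.fromRel_adj] at hx
    obtain ⟨hxne, hrel⟩ := hx
    match x with
    | Sum.inl f =>
      have hsh : ∃ v, v ∈ e2.val ∧ v ∈ f.val := by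
        rcases hrel with h | h
        · exact h
        · obtain ⟨v, hv1, hv2⟩ := h; exact ⟨v, hv2, hv1⟩
      obtain ⟨v, hv2, hvf⟩ := hsh
      have hv : v = u ∨ v = t2 := by simpa [he2def] using hv2
      rcases hv with hveq | hveq
      · by_cases hef : f = e1
        · subst hef; exact Set.mem_insert _ _
        · exact Set.mem_insert_of_mem _
            ⟨by simpa using (Ne.symm hef), Or.inl ⟨u, by simp [he1def], hveq ▸ hvf⟩⟩
      · exact absurd (by rw [hft2 f (hveq ▸ hvf)]) hxne
    | Sum.inr i =>
      rcases hrel with ⟨v, hvl, hvc, hvm⟩ | h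
      · have hv : v = u ∨ v = t2 := by simpa [he2def] using hvm
        rcases hv with rfl | rfl
        · exact absurd hvl hnleaf
        · exact Set.mem_insert_of_mem _
            ⟨by simp, Or.inl ⟨t1, h1, by rw [hcc, hvc], by simp [he1def]⟩⟩
      · exact h.elim
  have hnadj : ¬ (BGraph T c).Adj (Sum.inl e1) (Sum.inr (c u)) := by
    rw [BGraph, SimpleGraph.fromRel_adj]
    rintro ⟨-, ⟨v, hvl, hvc, hvm⟩ | h⟩
    · have hv : v = u ∨ v = t1 := by simpa [he1def] using hvm
      rcases hv with hveq | hveq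
      · exact hnleaf (hveq ▸ hvl)
      · exact hc u t1 hu1 (by rw [← hveq, hvc])
    · exact h
  set C : Set (↥T.edgeSet ⊕ Bool) :=
    (insert (Sum.inl e1) {y | (BGraph T c).Adj (Sum.inl e1) y}) \ {Sum.inl e2} with hCdef
  refine ⟨bgr_connected hT.isConnected h1 hu1, Sum.inl e1, C,
    ⟨Set.mem_insert _ _, by simp only [Set.mem_singleton_iff]; exact fun h => he12 (Sum.inl.inj h)⟩, Set.diff_subset, ?_⟩
  · intro hcon
    have hmem2 : (Sum.inl e2 : ↥T.edgeSet ⊕ Bool) ∈ Cᶜ := fun h => h.2 rfl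
    have hmemu : (Sum.inr (c u) : ↥T.edgeSet ⊕ Bool) ∈ Cᶜ := by
      intro h
      rcases h.1 with h' | h'
      · simp at h'
      · exact hnadj h'
    obtain ⟨wlk⟩ := hcon.preconnected ⟨Sum.inl e2, hmem2⟩ ⟨Sum.inr (c u), hmemu⟩
    have hnnil : ¬ wlk.Nil := by
      apply SimpleGraph.Walk.not_nil_of_ne
      intro h
      have := congrArg Subtype.val h
      simp at this
    rw [SimpleGraph.Walk.not_nil_iff] at hnnil
    obtain ⟨y, hadj, q, -⟩ := hnnil
    have hadj' : (BGraph T c).Adj (Sum.inl e2) y.val := hadj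
    have hyC : y.val ∈ C := by
      refine ⟨hnbr _ hadj', ?_⟩
      simp only [Set.mem_singleton_iff]
      intro h
      exact (BGraph T c).irrefl (h ▸ hadj')
    exact y.2 hyC
end

section
/- Let G be an even-hole-free graph and let (A1, C1, B1, A2, C2, B2) be a 2-join of G. Let Q be an induced path or a hole of G. If Q meets both A1 and A2, then |V(Q) ∩ (A1 ∪ A2)| ≤ 3. Similarly, if Q meets both B1 and B2, then |V(Q) ∩ (B1 ∪ B2)| ≤ 3. -/
open Classical

universe u

lemma square_helper {R : Type*} [CommRing R] {i j p q : R}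
    (h1 : p = i + 1 ∨ p = i - 1) (h2 : q = i + 1 ∨ q = i - 1)
    (h3 : p = j + 1 ∨ p = j - 1) (h4 : q = j + 1 ∨ q = j - 1)
    (hij : i ≠ j) (hpq : p ≠ q) : (4 : R) = 0 := by
  rcases h1 with h1 | h1 <;> rcases h2 with h2 | h2 <;>
    rcases h3 with h3 | h3 <;> rcases h4 with h4 | h4 <;>
  first
    | (exact absurd (by linear_combination h1 - h2) hpq)
    | (exact absurd (by linear_combination h1 - h3) hij)
    | (exact absurd (by linear_combination h3 - h1) hij)
    | (exact absurd (by linear_combination h2 - h4) hij)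
    | (exact absurd (by linear_combination h4 - h2) hij)
    | linear_combination h3 - h1 + h2 - h4
    | linear_combination h1 - h3 + h4 - h2

lemma nbr_pair {V : Type u} (G : SimpleGraph V) (Q : Set V)
    (hQ : InducesPath G Q ∨ IsHole G Q) {v : V} (hv : v ∈ Q) :
    ∃ p q : V, ∀ u ∈ Q, G.Adj v u → u = p ∨ u = q := by
  rcases hQ with ⟨l, ⟨hne, hnd, hadj⟩, hset⟩ | ⟨n, hn4, f, hinj, hrange, hadj⟩
  · have hv' : v ∈ l := by rw [← hset] at hv; exact hv
    obtain ⟨⟨i, hi⟩, hgi⟩ := List.mem_iff_get.mp hv'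
    refine ⟨l.getD (i + 1) v, l.getD (i - 1) v, ?_⟩
    intro u hu hau
    have hu' : u ∈ l := by rw [← hset] at hu; exact hu
    obtain ⟨⟨j, hj⟩, hgj⟩ := List.mem_iff_get.mp hu'
    rw [← hgi, ← hgj] at hau
    rcases (hadj i j hi hj).mp hau with h | h
    · left
      rw [← hgj, h, List.getD_eq_getElem l v hj]
      simp [List.get_eq_getElem]
    · right
      have h' : i - 1 = j := by omega
      rw [← hgj, h', List.getD_eq_getElem l v hj]
      simp [List.get_eq_getElem]
  · rw [← hrange] at hv
    obtain ⟨i, rfl⟩ := hv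
    refine ⟨f (i + 1), f (i - 1), ?_⟩
    intro u hu hau
    rw [← hrange] at hu
    obtain ⟨j, rfl⟩ := hu
    rcases (hadj i j).mp hau with h | h
    · left; rw [h]
    · right; rw [show i - 1 = j by rw [h]; ring]

lemma no_square {V : Type u} (G : SimpleGraph V) (hEH : EvenHoleFree G) (Q : Set V)
    (hQ : InducesPath G Q ∨ IsHole G Q) {v1 v2 u1 u2 : V}
    (hv1 : v1 ∈ Q) (hv2 : v2 ∈ Q) (hu1 : u1 ∈ Q) (hu2 : u2 ∈ Q)
    (hvne : v1 ≠ v2) (hune : u1 ≠ u2)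
    (a11 : G.Adj v1 u1) (a12 : G.Adj v1 u2) (a21 : G.Adj v2 u1) (a22 : G.Adj v2 u2) :
    False := by
  rcases hQ with ⟨l, ⟨hne, hnd, hadj⟩, hset⟩ | ⟨n, hn4, f, hinj, hrange, hadj⟩
  · have m1 : v1 ∈ l := by rw [← hset] at hv1; exact hv1
    have m2 : v2 ∈ l := by rw [← hset] at hv2; exact hv2
    have m3 : u1 ∈ l := by rw [← hset] at hu1; exact hu1
    have m4 : u2 ∈ l := by rw [← hset] at hu2; exact hu2
    obtain ⟨⟨i, hi⟩, hg1⟩ := List.mem_iff_get.mp m1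
    obtain ⟨⟨j, hj⟩, hg2⟩ := List.mem_iff_get.mp m2
    obtain ⟨⟨p, hp⟩, hg3⟩ := List.mem_iff_get.mp m3
    obtain ⟨⟨q, hq⟩, hg4⟩ := List.mem_iff_get.mp m4
    have hij : i ≠ j := fun h => hvne (by subst h; rw [← hg1, ← hg2])
    have hpq : p ≠ q := fun h => hune (by subst h; rw [← hg3, ← hg4])
    rw [← hg1, ← hg3] at a11
    rw [← hg1, ← hg4] at a12
    rw [← hg2, ← hg3] at a21
    rw [← hg2, ← hg4] at a22
    have e1 := (hadj i p hi hp).mp a11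
    have e2 := (hadj i q hi hq).mp a12
    have e3 := (hadj j p hj hp).mp a21
    have e4 := (hadj j q hj hq).mp a22
    omega
  · have hhole : IsHoleOn G n Q := ⟨hn4, f, hinj, hrange, hadj⟩
    rw [← hrange] at hv1 hv2 hu1 hu2
    obtain ⟨i, rfl⟩ := hv1
    obtain ⟨j, rfl⟩ := hv2
    obtain ⟨p, rfl⟩ := hu1
    obtain ⟨q, rfl⟩ := hu2
    have hij : i ≠ j := fun h => hvne (by rw [h])
    have hpq : p ≠ q := fun h => hune (by rw [h])
    have norm : ∀ a b : ZMod n, (b = a + 1 ∨ a = b + 1) → (b = a + 1 ∨ b = a - 1) := by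
      intro a b h
      rcases h with h | h
      · exact Or.inl h
      · exact Or.inr (by rw [h]; ring)
    have e1 := norm _ _ ((hadj i p).mp a11)
    have e2 := norm _ _ ((hadj i q).mp a12)
    have e3 := norm _ _ ((hadj j p).mp a21)
    have e4 := norm _ _ ((hadj j q).mp a22)
    have h4 : (4 : ZMod n) = 0 := square_helper e1 e2 e3 e4 hij hpq
    haveI : NeZero n := ⟨by omega⟩
    have hdvd : n ∣ 4 := by
      have : ((4 : ℕ) : ZMod n) = 0 := by exact_mod_cast h4
      exact (ZMod.natCast_eq_zero_iff 4 n).mp this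
    have hn : n = 4 := le_antisymm (Nat.le_of_dvd (by norm_num) hdvd) hn4
    exact hEH n Q hhole (by rw [hn]; decide)

lemma side_bound {V : Type u} [Finite V] (G : SimpleGraph V) (hEH : EvenHoleFree G)
    (Q : Set V) (hQ : InducesPath G Q ∨ IsHole G Q) (X Y : Set V)
    (hXY : Disjoint X Y) (hadj : ∀ x ∈ X, ∀ y ∈ Y, G.Adj x y)
    (h1 : (Q ∩ X).Nonempty) (h2 : (Q ∩ Y).Nonempty) :
    (Q ∩ (X ∪ Y)).ncard ≤ 3 := by
  obtain ⟨x, hxQ, hxX⟩ := h1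
  obtain ⟨y, hyQ, hyY⟩ := h2
  have hdisj : Disjoint (Q ∩ X) (Q ∩ Y) :=
    hXY.mono Set.inter_subset_right Set.inter_subset_right
  have hcap : Q ∩ (X ∪ Y) = (Q ∩ X) ∪ (Q ∩ Y) := Set.inter_union_distrib_left Q X Y
  rw [hcap, Set.ncard_union_eq hdisj (Set.toFinite _) (Set.toFinite _)]
  have pairbound : ∀ (p q : V) (S : Set V), S ⊆ {p, q} → S.ncard ≤ 2 := by
    intro p q S hS
    calc S.ncard ≤ ({p, q} : Set V).ncard := Set.ncard_le_ncard hS (Set.toFinite _)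
    _ ≤ 2 := (Set.ncard_insert_le p {q}).trans (by simp)
  have hsX : (Q ∩ X).ncard ≤ 2 := by
    obtain ⟨p, q, hpq⟩ := nbr_pair G Q hQ hyQ
    refine pairbound p q _ fun u hu => ?_
    rcases hpq u hu.1 ((hadj u hu.2 y hyY).symm) with h | h <;> simp [h]
  have hsY : (Q ∩ Y).ncard ≤ 2 := by
    obtain ⟨p, q, hpq⟩ := nbr_pair G Q hQ hxQ
    refine pairbound p q _ fun u hu => ?_
    rcases hpq u hu.1 (hadj x hxX u hu.2) with h | h <;> simp [h]
  by_contra hcon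
  have hXpos : 0 < (Q ∩ X).ncard := (Set.ncard_pos (Set.toFinite _)).mpr ⟨x, hxQ, hxX⟩
  have hYpos : 0 < (Q ∩ Y).ncard := (Set.ncard_pos (Set.toFinite _)).mpr ⟨y, hyQ, hyY⟩
  have hX2 : (Q ∩ X).ncard = 2 := by omega
  have hY2 : (Q ∩ Y).ncard = 2 := by omega
  obtain ⟨x1, x2, hx12, hXeq⟩ := Set.ncard_eq_two.mp hX2
  obtain ⟨y1, y2, hy12, hYeq⟩ := Set.ncard_eq_two.mp hY2
  have hx1 : x1 ∈ Q ∩ X := hXeq ▸ (by simp)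
  have hx2 : x2 ∈ Q ∩ X := hXeq ▸ (by simp)
  have hy1 : y1 ∈ Q ∩ Y := hYeq ▸ (by simp)
  have hy2 : y2 ∈ Q ∩ Y := hYeq ▸ (by simp)
  exact no_square G hEH Q hQ hx1.1 hx2.1 hy1.1 hy2.1 hx12 hy12
    (hadj x1 hx1.2 y1 hy1.2) (hadj x1 hx1.2 y2 hy2.2)
    (hadj x2 hx2.2 y1 hy1.2) (hadj x2 hx2.2 y2 hy2.2)

/-- In an even-hole-free graph with a 2-join, an induced path or hole meeting both `A1` and
`A2` has at most 3 vertices in `A1 ∪ A2`; similarly for `B1`, `B2`. -/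
theorem stmt6 {V : Type u} [Finite V] (G : SimpleGraph V)
    (hEH : EvenHoleFree G)
    (A1 C1 B1 A2 C2 B2 : Set V) (h2j : IsTwoJoin G A1 C1 B1 A2 C2 B2)
    (Q : Set V) (hQ : InducesPath G Q ∨ IsHole G Q) :
    ((Q ∩ A1).Nonempty → (Q ∩ A2).Nonempty → (Q ∩ (A1 ∪ A2)).ncard ≤ 3) ∧
    ((Q ∩ B1).Nonempty → (Q ∩ B2).Nonempty → (Q ∩ (B1 ∪ B2)).ncard ≤ 3) := by
  have h := h2j.1
  simp only [List.pairwise_cons] at h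
  have hdA : Disjoint A1 A2 := h.1 A2 (by simp)
  have hdB : Disjoint B1 B2 := h.2.2.1 B2 (by simp)
  exact ⟨side_bound G hEH Q hQ A1 A2 hdA h2j.2.2.1,
    side_bound G hEH Q hQ B1 B2 hdB h2j.2.2.2.1⟩
end

section
/- Let G be an even-hole-free graph and let (A1, C1, B1, A2, C2, B2) be a 2-join of G. Let P be a flat path of G. If P meets both A1 and A2, then V(P) ∩ (A1 ∪ A2) consists of the two endpoints of an edge of P. Similarly, if P meets both B1 and B2, then V(P) ∩ (B1 ∪ B2) consists of the two endpoints of an edge of P. -/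
open Classical

universe u

/-!
Since `A1` is complete to `A2`, a flat path meeting both contains an edge `a1 a2` with
`a1 ∈ A1`, `a2 ∈ A2`. A second vertex `v ∈ A1` of the path would also be adjacent to `a2`,
so `a2` would be an interior vertex of the path whose only neighbours are `a1` and `v`.
The end in `A2` of the marker path of `Z2` has a neighbour outside `A1`, so it is a vertex
`a2' ∈ A2` different from and non-adjacent to `a2`, and `a2, a1, a2', v` is a hole of
length four. The same argument applies with the two sides, and `A` and `B`, exchanged.
-/

section
variable {V : Type u} {G : SimpleGraph V}

theorem isHoleOn_four {a b c d : V} (hab : G.Adj a b) (hbc : G.Adj b c) (hcd : G.Adj c d)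
    (hda : G.Adj d a) (hac : ¬ G.Adj a c) (hbd : ¬ G.Adj b d) (hac' : a ≠ c) (hbd' : b ≠ d) :
    IsHoleOn G 4 {a, b, c, d} := by
  have := hab.ne; have := hbc.ne; have := hcd.ne; have := hda.ne
  have hcases : ∀ i : ZMod 4, i = 0 ∨ i = 1 ∨ i = 2 ∨ i = 3 := by decide
  set f : ZMod 4 → V := ![a, b, c, d]
  have f0 : f 0 = a := rfl
  have f1 : f 1 = b := rfl
  have f2 : f 2 = c := rfl
  have f3 : f 3 = d := rfl
  refine ⟨le_rfl, f, fun i j hij => ?_, ?_, fun i j => ?_⟩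
  · rcases hcases i with rfl | rfl | rfl | rfl <;> rcases hcases j with rfl | rfl | rfl | rfl <;>
      simp_all [eq_comm]
  · change Set.range (![a, b, c, d] : Fin 4 → V) = _
    simp only [Matrix.range_cons, Matrix.range_empty, Set.union_empty, Set.singleton_union]
  · rcases hcases i with rfl | rfl | rfl | rfl <;> rcases hcases j with rfl | rfl | rfl | rfl <;>
      simp [G.adj_comm, hda.symm, *] <;> decide

theorem EvenHoleFree.adj_or_adj_of_cycle_four (hG : EvenHoleFree G) {a b c d : V}
    (hab : G.Adj a b) (hbc : G.Adj b c) (hcd : G.Adj c d) (hda : G.Adj d a)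
    (hac : a ≠ c) (hbd : b ≠ d) : G.Adj a c ∨ G.Adj b d := by
  by_contra! h
  exact hG 4 _ (isHoleOn_four hab hbc hcd hda h.1 h.2 hac hbd) (by decide)

namespace IsInducedPathList

variable {l : List V}

theorem adj_of_eq_append (h : IsInducedPathList G l) {pre post : List V} {x y : V}
    (hl : l = pre ++ x :: y :: post) : G.Adj x y := by
  subst hl
  have hi : pre.length < (pre ++ x :: y :: post).length := by simp
  have hj : pre.length + 1 < (pre ++ x :: y :: post).length := by simp
  simpa [List.getElem_append_right] using (h.2.2 _ _ hi hj).mpr (Or.inl rfl)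

theorem exists_get_pair_of_adj (h : IsInducedPathList G l) {x y : V} (hx : x ∈ l)
    (hy : y ∈ l) (hxy : G.Adj x y) :
    ∃ (i : ℕ) (hi : i + 1 < l.length),
      ({x, y} : Set V) = {l.get ⟨i, Nat.lt_of_succ_lt hi⟩, l.get ⟨i + 1, hi⟩} := by
  obtain ⟨⟨p, hp⟩, rfl⟩ := List.mem_iff_get.mp hx
  obtain ⟨⟨q, hq⟩, rfl⟩ := List.mem_iff_get.mp hy
  rcases (h.2.2 p q hp hq).mp hxy with rfl | rfl
  · exact ⟨p, hq, rfl⟩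
  · exact ⟨q, hp, Set.pair_comm _ _⟩

theorem not_adj_of_adj_adj (h : IsInducedPathList G l) {x y z : V} (hx : x ∈ l) (hy : y ∈ l)
    (hz : z ∈ l) (hyx : G.Adj y x) (hyz : G.Adj y z) (hxz : x ≠ z) : ¬ G.Adj x z := by
  obtain ⟨⟨p, hp⟩, rfl⟩ := List.mem_iff_get.mp hx
  obtain ⟨⟨q, hq⟩, rfl⟩ := List.mem_iff_get.mp hy
  obtain ⟨⟨r, hr⟩, rfl⟩ := List.mem_iff_get.mp hz
  have hpr : p ≠ r := fun hpr => hxz (by subst hpr; rfl)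
  have hqp := (h.2.2 q p hq hp).mp hyx
  have hqr := (h.2.2 q r hq hr).mp hyz
  intro hxz
  have := (h.2.2 p r hp hr).mp hxz
  omega

theorem exists_interior_of_adj_adj (h : IsInducedPathList G l) {x y z : V} (hx : x ∈ l)
    (hy : y ∈ l) (hz : z ∈ l) (hyx : G.Adj y x) (hyz : G.Adj y z) (hxz : x ≠ z) :
    ∃ (i : ℕ) (hi : i < l.length), 0 < i ∧ i + 1 < l.length ∧ l.get ⟨i, hi⟩ = y := by
  obtain ⟨⟨p, hp⟩, rfl⟩ := List.mem_iff_get.mp hx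
  obtain ⟨⟨q, hq⟩, rfl⟩ := List.mem_iff_get.mp hy
  obtain ⟨⟨r, hr⟩, rfl⟩ := List.mem_iff_get.mp hz
  have hpr : p ≠ r := fun hpr => hxz (by subst hpr; rfl)
  have hqp := (h.2.2 q p hq hp).mp hyx
  have hqr := (h.2.2 q r hq hr).mp hyz
  exact ⟨q, hq, by omega, by omega, rfl⟩

end IsInducedPathList

theorem IsFlatPath.neighborSet_eq_pair {l : List V} (hl : IsFlatPath G l) {x y z : V}
    (hx : x ∈ l) (hy : y ∈ l) (hz : z ∈ l) (hyx : G.Adj y x) (hyz : G.Adj y z) (hxz : x ≠ z) :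
    {u | G.Adj y u} = {x, z} := by
  obtain ⟨i, hi, hi0, hil, rfl⟩ := hl.1.exists_interior_of_adj_adj hx hy hz hyx hyz hxz
  have hdeg := hl.2 i hi hi0 hil
  refine (Set.eq_of_subset_of_ncard_le ?_ ?_ ?_).symm
  · rintro u (rfl | rfl)
    exacts [hyx, hyz]
  · rw [hdeg, Set.ncard_pair hxz]
  · exact Set.finite_of_ncard_pos (by omega)

theorem IsFlatPath.eq_of_mem_of_isComplete (hG : EvenHoleFree G) {X Y : Set V}
    (hXY : Disjoint X Y) (hcomp : ∀ x ∈ X, ∀ y ∈ Y, G.Adj x y)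
    (hY : ∃ y ∈ Y, ∃ w ∉ X, G.Adj y w) {l : List V} (hl : IsFlatPath G l) {x y v : V}
    (hx : x ∈ l) (hxX : x ∈ X) (hy : y ∈ l) (hyY : y ∈ Y) (hv : v ∈ l) (hvX : v ∈ X) :
    v = x := by
  by_contra hvx
  have hyx := (hcomp x hxX y hyY).symm
  have hyv := (hcomp v hvX y hyY).symm
  have hxv := hl.1.not_adj_of_adj_adj hx hy hv hyx hyv (Ne.symm hvx)
  have hN := hl.neighborSet_eq_pair hx hy hv hyx hyv (Ne.symm hvx)
  have hNX : ∀ u, G.Adj y u → u ∈ X := fun u hu => by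
    rcases (hN ▸ hu : u ∈ ({x, v} : Set V)) with rfl | rfl <;> assumption
  obtain ⟨y', hy'Y, w, hwX, hy'w⟩ := hY
  have hyy' : y ≠ y' := by
    rintro rfl
    exact hwX (hNX w hy'w)
  have hyy'adj : ¬ G.Adj y y' := fun h => hXY.notMem_of_mem_right hy'Y (hNX y' h)
  rcases hG.adj_or_adj_of_cycle_four hyx (hcomp x hxX y' hy'Y) (hcomp v hvX y' hy'Y).symm
    hyv.symm hyy' (Ne.symm hvx) with h | h
  exacts [hyy'adj h, hxv h]

theorem IsFlatPath.exists_inter_union_eq_pair (hG : EvenHoleFree G) {X Y : Set V}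
    (hXY : Disjoint X Y) (hcomp : ∀ x ∈ X, ∀ y ∈ Y, G.Adj x y)
    (hX : ∃ x ∈ X, ∃ w ∉ Y, G.Adj x w) (hY : ∃ y ∈ Y, ∃ w ∉ X, G.Adj y w)
    {l : List V} (hl : IsFlatPath G l) (hlX : ({v | v ∈ l} ∩ X).Nonempty)
    (hlY : ({v | v ∈ l} ∩ Y).Nonempty) :
    ∃ (i : ℕ) (hi : i + 1 < l.length),
      {v | v ∈ l} ∩ (X ∪ Y) = {l.get ⟨i, Nat.lt_of_succ_lt hi⟩, l.get ⟨i + 1, hi⟩} := by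
  obtain ⟨x, hx, hxX⟩ := hlX
  obtain ⟨y, hy, hyY⟩ := hlY
  have hcomp' : ∀ y ∈ Y, ∀ x ∈ X, G.Adj y x := fun y hy x hx => (hcomp x hx y hy).symm
  have hpair : {v | v ∈ l} ∩ (X ∪ Y) = {x, y} := by
    ext u
    constructor
    · rintro ⟨hu, huX | huY⟩
      · exact Or.inl (hl.eq_of_mem_of_isComplete hG hXY hcomp hY hx hxX hy hyY hu huX)
      · exact Or.inr (hl.eq_of_mem_of_isComplete hG hXY.symm hcomp' hX hy hyY hx hxX hu huY)
    · rintro (rfl | rfl)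
      exacts [⟨hx, Or.inl hxX⟩, ⟨hy, Or.inr hyY⟩]
  rw [hpair]
  exact hl.1.exists_get_pair_of_adj hx hy (hcomp x hxX y hyY)

namespace IsMarkerPath

variable {A C B : Set V} {a b : V} {l : List V}

theorem exists_adj_fst (hm : IsMarkerPath G A C B a b l) : ∃ w ∈ C ∪ B, G.Adj a w := by
  obtain ⟨hp, -, hb, m, rfl, hmC⟩ := hm
  rcases m with _ | ⟨c, m⟩
  · exact ⟨b, Or.inr hb, hp.adj_of_eq_append (pre := []) rfl⟩
  · exact ⟨c, Or.inl (hmC c List.mem_cons_self), hp.adj_of_eq_append (pre := []) rfl⟩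

theorem exists_adj_snd (hm : IsMarkerPath G A C B a b l) : ∃ w ∈ A ∪ C, G.Adj b w := by
  obtain ⟨hp, ha, -, m, rfl, hmC⟩ := hm
  rcases m.eq_nil_or_concat with rfl | ⟨m, c, rfl⟩
  · exact ⟨a, Or.inl ha, (hp.adj_of_eq_append (pre := []) rfl).symm⟩
  · exact ⟨c, Or.inr (hmC c (by simp)),
      (hp.adj_of_eq_append (pre := a :: m) (post := []) (by simp)).symm⟩

end IsMarkerPath

end

theorem stmt7_general {V : Type u} (G : SimpleGraph V)
    (hEH : EvenHoleFree G)
    (A1 C1 B1 A2 C2 B2 : Set V) (h2j : IsTwoJoin G A1 C1 B1 A2 C2 B2)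
    (l : List V) (hl : IsFlatPath G l) :
    (({v | v ∈ l} ∩ A1).Nonempty → ({v | v ∈ l} ∩ A2).Nonempty →
      ∃ (i : ℕ) (h : i + 1 < l.length),
        {v | v ∈ l} ∩ (A1 ∪ A2) =
          {l.get ⟨i, Nat.lt_of_succ_lt h⟩, l.get ⟨i + 1, h⟩}) ∧
    (({v | v ∈ l} ∩ B1).Nonempty → ({v | v ∈ l} ∩ B2).Nonempty →
      ∃ (i : ℕ) (h : i + 1 < l.length),
        {v | v ∈ l} ∩ (B1 ∪ B2) =
          {l.get ⟨i, Nat.lt_of_succ_lt h⟩, l.get ⟨i + 1, h⟩}) := by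
  obtain ⟨hpw, -, hA, hB, -, ⟨a1, b1, m1, hm1, -⟩, ⟨a2, b2, m2, hm2, -⟩⟩ := h2j
  simp only [List.pairwise_cons, List.mem_cons, List.not_mem_nil, or_false, forall_eq_or_imp,
    forall_eq] at hpw
  obtain ⟨⟨-, -, hA1A2, hA1C2, hA1B2⟩, ⟨-, hC1A2, -, hC1B2⟩, ⟨hB1A2, hB1C2, hB1B2⟩, -⟩ := hpw
  obtain ⟨wa1, hwa1, ha1⟩ := hm1.exists_adj_fst
  obtain ⟨wa2, hwa2, ha2⟩ := hm2.exists_adj_fst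
  obtain ⟨wb1, hwb1, hb1⟩ := hm1.exists_adj_snd
  obtain ⟨wb2, hwb2, hb2⟩ := hm2.exists_adj_snd
  refine ⟨hl.exists_inter_union_eq_pair hEH hA1A2 hA ?_ ?_,
    hl.exists_inter_union_eq_pair hEH hB1B2 hB ?_ ?_⟩
  · exact ⟨a1, hm1.2.1, wa1, (hC1A2.union_left hB1A2).notMem_of_mem_left hwa1, ha1⟩
  · exact ⟨a2, hm2.2.1, wa2, (hA1C2.union_right hA1B2).notMem_of_mem_right hwa2, ha2⟩
  · exact ⟨b1, hm1.2.2.1, wb1, (hA1B2.union_left hC1B2).notMem_of_mem_left hwb1, hb1⟩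
  · exact ⟨b2, hm2.2.2.1, wb2, (hB1A2.union_right hB1C2).notMem_of_mem_right hwb2, hb2⟩

/-- In an even-hole-free graph with a 2-join, a flat path meeting both `A1` and `A2`
meets `A1 ∪ A2` exactly in the two endpoints of one of its edges; similarly for `B1`, `B2`. -/
theorem stmt7 {V : Type u} [Finite V] (G : SimpleGraph V)
    (hEH : EvenHoleFree G)
    (A1 C1 B1 A2 C2 B2 : Set V) (h2j : IsTwoJoin G A1 C1 B1 A2 C2 B2)
    (l : List V) (hl : IsFlatPath G l) :
    (({v | v ∈ l} ∩ A1).Nonempty → ({v | v ∈ l} ∩ A2).Nonempty →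
      ∃ (i : ℕ) (h : i + 1 < l.length),
        {v | v ∈ l} ∩ (A1 ∪ A2) =
          {l.get ⟨i, Nat.lt_of_succ_lt h⟩, l.get ⟨i + 1, h⟩}) ∧
    (({v | v ∈ l} ∩ B1).Nonempty → ({v | v ∈ l} ∩ B2).Nonempty →
      ∃ (i : ℕ) (h : i + 1 < l.length),
        {v | v ∈ l} ∩ (B1 ∪ B2) =
          {l.get ⟨i, Nat.lt_of_succ_lt h⟩, l.get ⟨i + 1, h⟩}) :=
  stmt7_general G hEH A1 C1 B1 A2 C2 B2 h2j l hl
end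

section
/- Let G be a graph with a clique cutset Q, let C be a connected component of G − Q, let G' = G[C ∪ Q] and G'' = G − C. If P is a flat path in G, then the intersection of P with G' is an induced path or empty, and likewise the intersection of P with G'' is an induced path or empty. -/
open Classical

universe u

private lemma interval_induces {V : Type u} (G : SimpleGraph V) (l : List V)
    (hl : IsInducedPathList G l) (S Q : Set V) (hQ : G.IsClique Q)
    (hfwd : ∀ i : ℕ, (h : i + 1 < l.length) → l[i]'(by omega) ∈ S → l[i+1]'h ∉ S →
      l[i]'(by omega) ∈ Q)
    (hbwd : ∀ i : ℕ, (h : i + 1 < l.length) → l[i+1]'h ∈ S → l[i]'(by omega) ∉ S →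
      l[i+1]'h ∈ Q) :
    {v | v ∈ l} ∩ S = ∅ ∨ InducesPath G ({v | v ∈ l} ∩ S) := by
  classical
  obtain ⟨hne, hnd, hadj⟩ := hl
  simp only [List.get_eq_getElem] at hadj
  by_cases hempty : {v | v ∈ l} ∩ S = ∅
  · exact Or.inl hempty
  right
  obtain ⟨v0, hv0⟩ := Set.nonempty_iff_ne_empty.mpr hempty
  obtain ⟨⟨i0, hi0, rfl⟩, hv0S⟩ :
      (∃ (k : ℕ) (h : k < l.length), l[k] = v0) ∧ v0 ∈ S := by
    refine ⟨List.mem_iff_getElem.mp hv0.1, hv0.2⟩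
  set P : ℕ → Prop := fun i => ∃ h : i < l.length, l[i] ∈ S with hPdef
  have hP0 : P i0 := ⟨hi0, hv0S⟩
  have hexP : ∃ i, P i := ⟨i0, hP0⟩
  set a := Nat.find hexP with ha_def
  have haP : P a := Nat.find_spec hexP
  have ha_min : ∀ k, P k → a ≤ k := fun k hk => Nat.find_min' hexP hk
  set b := Nat.findGreatest P (l.length - 1) with hb_def
  have hb_max : ∀ k, P k → k ≤ b := fun k hk =>
    Nat.le_findGreatest (by obtain ⟨h, -⟩ := hk; omega) hk
  have hbP : P b := Nat.findGreatest_spec (show i0 ≤ l.length - 1 by omega) hP0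
  have hab : a ≤ b := hb_max a haP
  obtain ⟨ha_lt, haS⟩ := haP
  obtain ⟨hb_lt, hbS⟩ := hbP
  -- the index set is an interval
  have hint : ∀ k, a ≤ k → k ≤ b → ∃ h : k < l.length, l[k] ∈ S := by
    intro k hak hkb
    refine ⟨by omega, ?_⟩
    by_contra hkS
    have h1 : a < k := lt_of_le_of_ne hak (by rintro rfl; exact hkS haS)
    have h2 : k < b := lt_of_le_of_ne hkb (by rintro rfl; exact hkS hbS)
    -- last index ≤ k in S
    obtain ⟨a', ha'lt, ha'P, hnext⟩ : ∃ a', a' < k ∧ P a' ∧ ¬ P (a' + 1) := by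
      have h5 : P (Nat.findGreatest P k) := Nat.findGreatest_spec h1.le ⟨ha_lt, haS⟩
      have h6 : Nat.findGreatest P k ≤ k := Nat.findGreatest_le k
      have h7 : Nat.findGreatest P k ≠ k := fun h => hkS (h ▸ h5).2
      exact ⟨Nat.findGreatest P k, by omega, h5,
        Nat.findGreatest_is_greatest (n := k) (by omega) (by omega)⟩
    have ha'n : a' < l.length := ha'P.1
    have hQa : l[a']'(by omega) ∈ Q :=
      hfwd a' (by omega) ha'P.2 (fun hS => hnext ⟨by omega, hS⟩)
    -- first index > k in S
    have hexd : ∃ d, P (k + d + 1) := ⟨b - k - 1, by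
      have h3 : k + (b - k - 1) + 1 = b := by omega
      rw [h3]; exact ⟨hb_lt, hbS⟩⟩
    set d := Nat.find hexd with hd_def
    have hdP : P (k + d + 1) := Nat.find_spec hexd
    have hprev : ¬ P (k + d) := by
      rcases Nat.eq_zero_or_pos d with hd | hd
      · rw [hd]; exact fun h => hkS h.2
      · have h4 := Nat.find_min hexd (show d - 1 < d by omega)
        have h5 : k + (d - 1) + 1 = k + d := by omega
        rwa [h5] at h4
    have hb'lt : k + d + 1 < l.length := hdP.1
    have hQb : l[k+d+1]'hb'lt ∈ Q :=
      hbwd (k + d) hb'lt hdP.2 (fun hS => hprev ⟨by omega, hS⟩)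
    have hne' : l[a']'(by omega) ≠ l[k+d+1]'hb'lt := by
      intro h
      have := (List.Nodup.getElem_inj_iff hnd).mp h
      omega
    have hadj' := hQ hQa hQb hne'
    rw [hadj a' (k + d + 1) (by omega) hb'lt] at hadj'
    omega
  -- build the path
  have hmlen : ((l.drop a).take (b + 1 - a)).length = b + 1 - a := by
    rw [List.length_take, List.length_drop]; omega
  refine ⟨(l.drop a).take (b + 1 - a), ⟨?_, ?_, ?_⟩, ?_⟩
  · exact List.ne_nil_of_length_pos (by omega)
  · exact ((List.take_sublist _ _).trans (List.drop_sublist _ _)).nodup hnd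
  · intro i j hi hj
    simp only [List.get_eq_getElem, List.getElem_take, List.getElem_drop]
    rw [hadj (a + i) (a + j) (by omega) (by omega)]
    omega
  · ext v
    simp only [Set.mem_setOf_eq, Set.mem_inter_iff, List.mem_iff_getElem]
    constructor
    · rintro ⟨t, ht, rfl⟩
      have hmt : ((l.drop a).take (b + 1 - a))[t] = l[a+t]'(by omega) := by
        simp [List.getElem_take, List.getElem_drop]
      rw [hmt]
      exact ⟨⟨a + t, by omega, rfl⟩, (hint (a + t) (by omega) (by omega)).2⟩
    · rintro ⟨⟨k, hk, rfl⟩, hS⟩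
      have hak : a ≤ k := ha_min k ⟨hk, hS⟩
      have hkb : k ≤ b := hb_max k ⟨hk, hS⟩
      refine ⟨k - a, by omega, ?_⟩
      have h2 : a + (k - a) = k := by omega
      simp [List.getElem_take, List.getElem_drop, h2]

/-- If `Q` is a clique cutset of `G`, `C` is a component of `G - Q`, and `P` is a flat path
of `G`, then `P ∩ (C ∪ Q)` and `P ∩ (V ∖ C)` each induce a path or are empty. -/
theorem stmt12 {V : Type u} [Finite V] (G : SimpleGraph V)
    (Q : Set V) (hQ : IsCliqueCutset G Q)
    (C : Set V) (hC : IsCompOf G (Qᶜ) C)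
    (l : List V) (hl : IsFlatPath G l) :
    ({v | v ∈ l} ∩ (C ∪ Q) = ∅ ∨ InducesPath G ({v | v ∈ l} ∩ (C ∪ Q))) ∧
    ({v | v ∈ l} ∩ Cᶜ = ∅ ∨ InducesPath G ({v | v ∈ l} ∩ Cᶜ)) := by
  obtain ⟨hclique, -⟩ := hQ
  obtain ⟨comp, rfl⟩ := hC
  obtain ⟨hip, -⟩ := hl
  set C : Set V := Subtype.val '' comp.supp with hC_def
  have hCQ : ∀ x ∈ C, x ∉ Q := by
    rintro x ⟨⟨x, hx⟩, -, rfl⟩ hxQ; exact hx hxQ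
  have hB : ∀ x y, x ∈ C → y ∉ Q → G.Adj x y → y ∈ C := by
    rintro x y ⟨⟨x, hx⟩, hxc, rfl⟩ hyQ hxy
    refine ⟨⟨y, hyQ⟩, ?_, rfl⟩
    rw [SimpleGraph.ConnectedComponent.mem_supp_iff] at hxc ⊢
    rw [← hxc]
    exact SimpleGraph.ConnectedComponent.sound
      (SimpleGraph.Adj.reachable (by simpa using hxy.symm))
  have hcons : ∀ i : ℕ, (h : i + 1 < l.length) → G.Adj (l[i]'(by omega)) (l[i+1]'h) := by
    intro i h
    have := hip.2.2 i (i + 1) (by omega) h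
    simp only [List.get_eq_getElem] at this
    exact this.mpr (Or.inl trivial)
  constructor
  · refine interval_induces G l hip (C ∪ Q) Q hclique ?_ ?_
    · intro i h hx hy
      rcases hx with hx | hx
      · exact absurd (Or.inl (hB _ _ hx (fun hq => hy (Or.inr hq)) (hcons i h))) hy
      · exact hx
    · intro i h hx hy
      rcases hx with hx | hx
      · exact absurd (Or.inl (hB _ _ hx (fun hq => hy (Or.inr hq)) (hcons i h).symm)) hy
      · exact hx
  · refine interval_induces G l hip (Cᶜ) Q hclique ?_ ?_
    · intro i h hx hy
      have hyC : l[i+1]'h ∈ C := not_not.mp hy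
      by_contra hxQ
      exact hx (hB _ _ hyC hxQ (hcons i h).symm)
    · intro i h hx hy
      have hyC : l[i]'(by omega) ∈ C := not_not.mp hy
      by_contra hxQ
      exact hx (hB _ _ hyC hxQ (hcons i h))
end

section
/- Let G be a minimal non-weakly flat path extendable graph. Then G does not have a clique cutset. -/
open Classical

universe u

/-!
Let `Q` be a clique cutset separating `C` from `D`, and put `S = Q ∪ C`, `T = Q ∪ D`. A hole
minus a clique is connected, so every hole lies in `G[S]` or in `G[T]`; hence chordal covers of
`S` and of `T` that agree on `Q` glue to a chordal cover of `G`.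

Take a precover on a path `P` with at most two vertices; `P` lies in `S`, say. By minimality its
restriction to `G[S]` extends. If `P` meets `Q`, the restriction to `G[T]` (a precover on
`P ∩ T`) extends as well, and both extensions agree with the precover on `Q ⊆ N[P]`. Otherwise
it suffices to split `T` into two chordal sets compatibly with the split of `Q`. Such a split
exists in every proper induced subgraph, by induction: split `N(q)` first, add `q` to both parts,
and extend this precover on the one-vertex path `q`.
-/

open Set Function SimpleGraph

variable {V : Type u} {G : SimpleGraph V}

lemma ZMod.natCast_ne_zero_of_pos_of_lt {n k : ℕ} (hk : 0 < k) (hkn : k < n) :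
    (k : ZMod n) ≠ 0 := by
  rw [Ne, ZMod.natCast_eq_zero_iff]
  exact fun h => (Nat.le_of_dvd hk h).not_gt hkn

lemma ZMod.eq_or_eq_add_one_or_exists_nat {n : ℕ} (hn : 2 ≤ n) (i j : ZMod n) :
    i = j ∨ i = j + 1 ∨ ∃ t : ℕ, t + 2 < n ∧ i = j + 2 + t := by
  have : NeZero n := ⟨by omega⟩
  have ht : (((i - j - 2).val : ℕ) : ZMod n) = i - j - 2 := ZMod.natCast_zmod_val _
  have hlt := ZMod.val_lt (i - j - 2)
  obtain h | h | h : (i - j - 2).val + 2 < n ∨ (i - j - 2).val + 2 = n ∨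
      (i - j - 2).val + 1 = n := by omega
  · exact Or.inr (Or.inr ⟨_, h, by rw [ht]; ring⟩)
  · left
    have : ((((i - j - 2).val + 2 : ℕ)) : ZMod n) = 0 := by rw [h, ZMod.natCast_self]
    push_cast [ht] at this
    linear_combination this
  · refine Or.inr (Or.inl ?_)
    have : ((((i - j - 2).val + 1 : ℕ)) : ZMod n) = 0 := by rw [h, ZMod.natCast_self]
    push_cast [ht] at this
    linear_combination this

lemma exists_clique_indices_consecutive {n : ℕ} (hn : 4 ≤ n) {f : ZMod n → V}
    (hf : Injective f) (hadj : ∀ i j, G.Adj (f i) (f j) ↔ (j = i + 1 ∨ i = j + 1)) {K : Set V}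
    (hK : G.IsClique K) : ∃ j, ∀ i, f i ∈ K → i = j ∨ i = j + 1 := by
  have h1 : (1 : ZMod n) ≠ 0 := by
    exact_mod_cast ZMod.natCast_ne_zero_of_pos_of_lt (k := 1) one_pos (by omega)
  have h3 : (3 : ZMod n) ≠ 0 := by
    exact_mod_cast ZMod.natCast_ne_zero_of_pos_of_lt (k := 3) (by omega) (by omega)
  have hcons : ∀ i i', f i ∈ K → f i' ∈ K → i ≠ i' → i' = i + 1 ∨ i = i' + 1 :=
    fun i i' hi hi' hne => (hadj i i').1 (hK hi hi' (hf.ne hne))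
  by_cases hedge : ∃ j, f j ∈ K ∧ f (j + 1) ∈ K
  · obtain ⟨j, hj, hj1⟩ := hedge
    refine ⟨j, fun i hi => ?_⟩
    by_contra! hne
    have hji := hcons _ _ hj hi hne.1.symm
    have hj1i := hcons _ _ hj1 hi hne.2.symm
    -- `i` would be a neighbour of both `j` and `j + 1`, forcing `1 = 0` or `3 = 0`.
    grind
  · by_cases hK' : ∃ j, f j ∈ K
    · obtain ⟨j, hj⟩ := hK'
      refine ⟨j, fun i hi => Or.inl ?_⟩
      by_contra hne
      rcases hcons _ _ hj hi (Ne.symm hne) with rfl | rfl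
      · exact hedge ⟨j, hj, hi⟩
      · exact hedge ⟨i, hi, hj⟩
    · exact ⟨0, fun i hi => (hK' ⟨i, hi⟩).elim⟩

lemma IsHoleOn.exists_not_adj {n : ℕ} {H : Set V} {x : V} (h : IsHoleOn G n H) (hx : x ∈ H) :
    ∃ y ∈ H, y ≠ x ∧ ¬ G.Adj x y := by
  obtain ⟨hn, f, hf, rfl, hadj⟩ := h
  obtain ⟨i, rfl⟩ := hx
  have h1 : (1 : ZMod n) ≠ 0 := by
    exact_mod_cast ZMod.natCast_ne_zero_of_pos_of_lt (k := 1) one_pos (by omega)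
  have h2 : (2 : ZMod n) ≠ 0 := by
    exact_mod_cast ZMod.natCast_ne_zero_of_pos_of_lt (k := 2) (by omega) (by omega)
  have h3 : (3 : ZMod n) ≠ 0 := by
    exact_mod_cast ZMod.natCast_ne_zero_of_pos_of_lt (k := 3) (by omega) (by omega)
  refine ⟨f (i + 2), mem_range_self _, fun he => h2 ?_, fun ha => ?_⟩
  · simpa using hf he
  · rcases (hadj _ _).1 ha with h | h
    · exact h1 (by linear_combination h)
    · exact h3 (by linear_combination -h)

lemma IsHoleOn.preconnected_induce_diff {n : ℕ} {H K : Set V} (h : IsHoleOn G n H)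
    (hK : G.IsClique K) : (G.induce (H \ K)).Preconnected := by
  obtain ⟨hn, f, hf, rfl, hadj⟩ := h
  obtain ⟨j, hj⟩ := exists_clique_indices_consecutive hn hf hadj hK
  have hout : ∀ t : Fin (n - 2), f (j + 2 + t) ∈ range f \ K := by
    refine fun t => ⟨mem_range_self _, fun htK => ?_⟩
    rcases hj _ htK with h | h
    · exact ZMod.natCast_ne_zero_of_pos_of_lt (n := n) (k := t + 2) (by omega) (by omega)
        (by push_cast; linear_combination h)
    · exact ZMod.natCast_ne_zero_of_pos_of_lt (n := n) (k := t + 1) (by omega) (by omega)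
        (by push_cast; linear_combination h)
  let φ : pathGraph (n - 2) →g G.induce (range f \ K) :=
    { toFun := fun t => ⟨f (j + 2 + t), hout t⟩
      map_rel' := fun {s t} hst => by
        refine (hadj _ _).2 ?_
        rcases pathGraph_adj.1 hst with h | h
        · left; rw [← h]; push_cast; ring
        · right; rw [← h]; push_cast; ring }
  have hφ : ∀ t, (G.induce (range f \ K)).Reachable (φ ⟨0, by omega⟩) (φ t) :=
    fun t => (pathGraph_preconnected _ _ t).map φ
  -- The path `f (j + 2), …, f (j - 1)` misses only `f j` and `f (j + 1)`, which are adjacent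
  -- to its two ends.
  suffices hbase : ∀ u, (G.induce (range f \ K)).Reachable (φ ⟨0, by omega⟩) u from
    fun u v => (hbase u).symm.trans (hbase v)
  rintro ⟨_, ⟨i, rfl⟩, hiK⟩
  rcases ZMod.eq_or_eq_add_one_or_exists_nat (by omega) i j with rfl | rfl | ⟨t, ht, rfl⟩
  · have h3 : ((n - 3 : ℕ) : ZMod n) + 3 = 0 := by
      have : ((n - 3 + 3 : ℕ) : ZMod n) = 0 := by
        rw [Nat.sub_add_cancel (by omega), ZMod.natCast_self]
      exact_mod_cast this
    refine (hφ ⟨n - 3, by omega⟩).trans (Adj.reachable ((hadj _ _).2 (Or.inl ?_)))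
    linear_combination -h3
  · exact Adj.reachable ((hadj _ _).2 (Or.inr (by push_cast; ring)))
  · exact hφ ⟨t, by omega⟩

lemma ChordalSet.mono {X Y : Set V} (hY : ChordalSet G Y) (h : X ⊆ Y) : ChordalSet G X :=
  fun H hH => hY H (hH.trans h)

lemma chordalSet_empty : ChordalSet G ∅ := by
  rintro H hH ⟨n, -, f, -, rfl, -⟩
  exact hH (mem_range_self 0)

lemma ChordalSet.insert_of_forall_adj {X : Set V} {q : V} (hX : ChordalSet G X)
    (hq : ∀ x ∈ X, G.Adj q x) : ChordalSet G (insert q X) := by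
  rintro H hH ⟨n, hn⟩
  by_cases hqH : q ∈ H
  · obtain ⟨y, hyH, hyq, hny⟩ := hn.exists_not_adj hqH
    exact hny (hq y ((hH hyH).resolve_left hyq))
  · exact hX H (fun v hv => (hH hv).resolve_left (ne_of_mem_of_not_mem hv hqH)) ⟨n, hn⟩

lemma isHoleOn_induce_iff {S : Set V} {n : ℕ} {H : Set S} :
    IsHoleOn (G.induce S) n H ↔ IsHoleOn G n (Subtype.val '' H) := by
  constructor
  · rintro ⟨hn, f, hf, rfl, hadj⟩
    exact ⟨hn, Subtype.val ∘ f, Subtype.val_injective.comp hf, range_comp _ _, hadj⟩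
  · rintro ⟨hn, f, hf, hrange, hadj⟩
    have hfS : ∀ i, f i ∈ S := fun i => by
      obtain ⟨x, -, hx⟩ := hrange ▸ mem_range_self (f := f) i
      exact hx ▸ x.2
    refine ⟨hn, fun i => ⟨f i, hfS i⟩, fun i j h => hf (congrArg Subtype.val h), ?_, hadj⟩
    refine image_injective.2 Subtype.val_injective ?_
    rw [← hrange, ← range_comp]
    rfl

lemma chordalSet_induce_iff {S : Set V} {X : Set S} :
    ChordalSet (G.induce S) X ↔ ChordalSet G (Subtype.val '' X) := by
  constructor
  · rintro hX H hH ⟨n, hn⟩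
    have hHS : H ⊆ range Subtype.val := hH.trans (image_subset_range _ _)
    refine hX (Subtype.val ⁻¹' H) (fun x hx => ?_) ⟨n, ?_⟩
    · exact Subtype.val_injective.mem_set_image.1 (hH hx)
    · rwa [isHoleOn_induce_iff, image_preimage_eq_of_subset hHS]
  · rintro hX H hH ⟨n, hn⟩
    exact hX _ (image_mono hH) ⟨n, isHoleOn_induce_iff.1 hn⟩

lemma ChordalSet.preimage_val {S W : Set V} (hW : ChordalSet G W) :
    ChordalSet (G.induce S) (Subtype.val ⁻¹' W) :=
  chordalSet_induce_iff.2 (hW.mono (image_preimage_subset _ _))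

lemma closedNbhd_mono {P P' : Set V} (h : P ⊆ P') : ClosedNbhd G P ⊆ ClosedNbhd G P' :=
  union_subset_union h fun _ ⟨s, hs, hadj⟩ => ⟨s, h hs, hadj⟩

lemma closedNbhd_singleton (q : V) : ClosedNbhd G {q} = insert q (G.neighborSet q) := by
  ext v
  simp [ClosedNbhd, adj_comm]

lemma IsInducedPathList.exists_pair {l : List V} (hl : IsInducedPathList G l)
    (hlen : l.length ≤ 2) : ∃ a b, (a = b ∨ G.Adj a b) ∧ {v | v ∈ l} = {a, b} := by
  match l, hl, hlen with
  | [], hl, _ => exact (hl.1 rfl).elim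
  | [a], _, _ => exact ⟨a, a, Or.inl rfl, by ext; simp⟩
  | [a, b], hl, _ =>
    refine ⟨a, b, Or.inr ?_, by ext; simp⟩
    simpa using (hl.2.2 0 1 (by simp) (by simp)).2 (Or.inl rfl)
  | _ :: _ :: _ :: _, _, hlen => simp at hlen

lemma exists_isInducedPathList {a b : V} (hab : a = b ∨ G.Adj a b) :
    ∃ l, IsInducedPathList G l ∧ l.length ≤ 2 ∧ {v | v ∈ l} = {a, b} := by
  rcases hab with rfl | hab
  · refine ⟨[a], ⟨by simp, by simp, fun i j hi hj => ?_⟩, by simp, by ext; simp⟩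
    simp only [List.length_singleton, Nat.lt_one_iff] at hi hj
    subst hi hj
    simp
  · refine ⟨[a, b], ⟨by simp, by simp [hab.ne], fun i j hi hj => ?_⟩, by simp,
      by ext; simp⟩
    simp only [List.length_cons, List.length_nil] at hi hj
    interval_cases i <;> interval_cases j <;> simp [hab, hab.symm]

lemma weaklyFPE_iff : WeaklyFPE G ↔ ∀ a b, (a = b ∨ G.Adj a b) → ∀ W1 W2 : Set V,
    ChordalSet G W1 → ChordalSet G W2 → W1 ∩ W2 = {a, b} →
      W1 ∪ W2 = ClosedNbhd G {a, b} → ExtendsToCover G {a, b} W1 W2 := by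
  constructor
  · intro h a b hab
    obtain ⟨l, hl, hlen, hset⟩ := exists_isInducedPathList hab
    rw [← hset]
    exact h l hl hlen
  · intro h l hl hlen
    obtain ⟨a, b, hab, hset⟩ := hl.exists_pair hlen
    rw [hset]
    exact h a b hab

lemma weaklyFPE_of_isClique_univ (hG : G.IsClique univ) : WeaklyFPE G := by
  refine weaklyFPE_iff.2 fun a b _ W1 W2 hc1 hc2 hint huni =>
    ⟨W1, W2, subset_rfl, subset_rfl, hc1, hc2, hint, ?_⟩
  refine huni.trans (eq_univ_of_forall fun v => ?_)
  by_cases hv : v = a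
  · exact Or.inl (by simp [hv])
  · exact Or.inr ⟨a, mem_insert a _, hG trivial trivial hv⟩

/-- The trace on `S` of an extension of the precover `(W1, W2)` on the path `P`. -/
structure IsChordalCover (G : SimpleGraph V) (S P W1 W2 Z1 Z2 : Set V) : Prop where
  chordalSet_left : ChordalSet G Z1
  chordalSet_right : ChordalSet G Z2
  union_eq : Z1 ∪ Z2 = S
  inter_subset : Z1 ∩ Z2 ⊆ P
  subset_left : W1 ∩ S ⊆ Z1
  subset_right : W2 ∩ S ⊆ Z2

namespace IsChordalCover

variable {S T P W1 W2 Z1 Z2 U1 U2 : Set V}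

lemma symm (hZ : IsChordalCover G S P W1 W2 Z1 Z2) : IsChordalCover G S P W2 W1 Z2 Z1 :=
  ⟨hZ.chordalSet_right, hZ.chordalSet_left, union_comm Z1 Z2 ▸ hZ.union_eq,
    inter_comm Z1 Z2 ▸ hZ.inter_subset, hZ.subset_right, hZ.subset_left⟩

lemma left_subset (hZ : IsChordalCover G S P W1 W2 Z1 Z2) : Z1 ⊆ S :=
  hZ.union_eq ▸ subset_union_left

lemma right_subset (hZ : IsChordalCover G S P W1 W2 Z1 Z2) : Z2 ⊆ S :=
  hZ.symm.left_subset

lemma inter_eq_inter (hZ : IsChordalCover G S P W1 W2 Z1 Z2) (hP : P ⊆ W1 ∩ W2)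
    (hST : S ∩ T ⊆ W1 ∪ W2) : Z1 ∩ T = W1 ∩ (S ∩ T) := by
  ext v
  constructor
  · rintro ⟨hvZ, hvT⟩
    have hvS := hZ.left_subset hvZ
    refine ⟨(hST ⟨hvS, hvT⟩).elim id fun hvW => ?_, hvS, hvT⟩
    exact (hP (hZ.inter_subset ⟨hvZ, hZ.subset_right ⟨hvW, hvS⟩⟩)).1
  · rintro ⟨hvW, hvS, hvT⟩
    exact ⟨hZ.subset_left ⟨hvW, hvS⟩, hvT⟩

end IsChordalCover

lemma WeaklyFPE.exists_isChordalCover {S W1 W2 : Set V} {a b : V}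
    (hS : WeaklyFPE (G.induce S)) (ha : a ∈ S) (hb : b ∈ S) (hab : a = b ∨ G.Adj a b)
    (hc1 : ChordalSet G W1) (hc2 : ChordalSet G W2) (hint : W1 ∩ W2 ∩ S = {a, b})
    (huni : (W1 ∪ W2) ∩ S = ClosedNbhd G {a, b} ∩ S) :
    ∃ Z1 Z2, IsChordalCover G S {a, b} W1 W2 Z1 Z2 := by
  have hint' : Subtype.val ⁻¹' W1 ∩ Subtype.val ⁻¹' W2 = {⟨a, ha⟩, ⟨b, hb⟩} := by
    ext ⟨x, hx⟩
    simpa [Subtype.ext_iff, hx] using Set.ext_iff.1 hint x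
  have huni' : Subtype.val ⁻¹' W1 ∪ Subtype.val ⁻¹' W2 =
      ClosedNbhd (G.induce S) {⟨a, ha⟩, ⟨b, hb⟩} := by
    ext ⟨x, hx⟩
    simpa [ClosedNbhd, Subtype.ext_iff, hx, ha, hb] using Set.ext_iff.1 huni x
  obtain ⟨X1, X2, h1, h2, hX1, hX2, hX, hX'⟩ := weaklyFPE_iff.1 hS ⟨a, ha⟩ ⟨b, hb⟩
    (by simpa [Subtype.ext_iff] using hab) _ _ hc1.preimage_val hc2.preimage_val hint' huni'
  refine ⟨_, _, chordalSet_induce_iff.1 hX1, chordalSet_induce_iff.1 hX2, ?_, ?_, ?_, ?_⟩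
  · rw [← image_union, hX', image_univ, Subtype.range_coe]
  · rw [← image_inter Subtype.val_injective, hX, image_pair]
  · exact fun w hw => ⟨⟨w, hw.2⟩, h1 hw.1, rfl⟩
  · exact fun w hw => ⟨⟨w, hw.2⟩, h2 hw.1, rfl⟩

lemma WeaklyFPE.exists_chordalSet_partition_insert {T U1 U2 : Set V} {q : V}
    (hT : WeaklyFPE (G.induce T)) (hq : q ∈ T) (hU : U1 ∪ U2 = G.neighborSet q ∩ T)
    (hU12 : Disjoint U1 U2) (hc1 : ChordalSet G U1) (hc2 : ChordalSet G U2) :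
    ∃ Z1 Z2, insert q U1 ⊆ Z1 ∧ U2 ⊆ Z2 ∧ Disjoint Z1 Z2 ∧ Z1 ∪ Z2 = T ∧
      ChordalSet G Z1 ∧ ChordalSet G Z2 := by
  have hU1 : U1 ⊆ G.neighborSet q ∩ T := hU ▸ subset_union_left
  have hU2 : U2 ⊆ G.neighborSet q ∩ T := hU ▸ subset_union_right
  obtain ⟨Z1, Z2, hZ⟩ := hT.exists_isChordalCover (W1 := insert q U1) (W2 := insert q U2) hq hq
    (Or.inl rfl) (hc1.insert_of_forall_adj fun v hv => (hU1 hv).1)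
    (hc2.insert_of_forall_adj fun v hv => (hU2 hv).1)
    (by rw [← insert_inter_distrib, hU12.inter_eq, insert_inter_of_mem hq, empty_inter,
      pair_eq_singleton, insert_empty_eq])
    (by rw [← insert_union_distrib, hU, pair_eq_singleton, closedNbhd_singleton,
      insert_inter_of_mem hq, insert_inter_of_mem hq, inter_assoc, inter_self])
  have hqZ1 : q ∈ Z1 := hZ.subset_left ⟨mem_insert q U1, hq⟩
  refine ⟨Z1, Z2 \ {q}, fun v hv => hZ.subset_left ⟨hv, ?_⟩, fun v hv => ⟨?_, ?_⟩, ?_, ?_,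
    hZ.chordalSet_left, hZ.chordalSet_right.mono sdiff_subset⟩
  · rcases hv with rfl | hv
    exacts [hq, (hU1 hv).2]
  · exact hZ.subset_right ⟨mem_insert_of_mem q hv, (hU2 hv).2⟩
  · exact ((hU2 hv).1.ne).symm
  · refine Set.disjoint_left.2 fun v hv1 hv2 => hv2.2 ?_
    simpa using hZ.inter_subset ⟨hv1, hv2.1⟩
  · rw [← hZ.union_eq]
    ext v
    by_cases hv : v = q <;> simp [hv, hqZ1]

theorem exists_chordalSet_partition [Finite V] {T A B : Set V}
    (hT : ∀ T' ⊆ T, WeaklyFPE (G.induce T')) (hAB : Disjoint A B) (hK : G.IsClique (A ∪ B))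
    (hA : A ⊆ T) (hB : B ⊆ T) :
    ∃ U1 U2, A ⊆ U1 ∧ B ⊆ U2 ∧ Disjoint U1 U2 ∧ U1 ∪ U2 = T ∧
      ChordalSet G U1 ∧ ChordalSet G U2 := by
  induction T using WellFoundedLT.induction generalizing A B with
  | _ T ih =>
  wlog hA' : (A ∪ B).Nonempty → A.Nonempty generalizing A B
  · push Not at hA'
    obtain ⟨hABne, rfl⟩ := hA'
    obtain ⟨U1, U2, hBU, hAU, hU12, hU, hc1, hc2⟩ :=
      this hAB.symm (union_comm _ B ▸ hK) hB hA fun _ => by simpa using hABne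
    exact ⟨U2, U1, hAU, hBU, hU12.symm, union_comm U1 U2 ▸ hU, hc2, hc1⟩
  rcases T.eq_empty_or_nonempty with rfl | hTne
  · exact ⟨∅, ∅, hA, hB, disjoint_empty _, union_empty _, chordalSet_empty,
      chordalSet_empty⟩
  obtain ⟨q, hqT, hqB, hqK⟩ :
      ∃ q ∈ T, q ∉ B ∧ ∀ v ∈ A ∪ B, v ≠ q → G.Adj q v := by
    rcases A.eq_empty_or_nonempty with rfl | ⟨q, hq⟩
    · obtain rfl : B = ∅ := by simpa [not_nonempty_iff_eq_empty] using hA'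
      obtain ⟨q, hq⟩ := hTne
      exact ⟨q, hq, by simp⟩
    · exact ⟨q, hA hq, Set.disjoint_left.1 hAB hq,
        fun v hv hvq => hK (Or.inl hq) hv hvq.symm⟩
  have hN : G.neighborSet q ∩ T < T := ⟨inter_subset_right, fun h => G.irrefl (h hqT).1⟩
  obtain ⟨U1, U2, hAU, hBU, hU12, hU, hc1, hc2⟩ :=
    ih _ hN (fun T' h => hT T' (h.trans hN.le)) (A := A \ {q}) (B := B)
      (hAB.mono_left sdiff_subset) (hK.subset (union_subset_union_left B sdiff_subset))
      (fun v hv => ⟨hqK v (Or.inl hv.1) hv.2, hA hv.1⟩)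
      (fun v hv => ⟨hqK v (Or.inr hv) (ne_of_mem_of_not_mem hv hqB), hB hv⟩)
  obtain ⟨Z1, Z2, hZ1, hZ2, hZ⟩ :=
    (hT T subset_rfl).exists_chordalSet_partition_insert hqT hU hU12 hc1 hc2
  refine ⟨Z1, Z2, fun v hv => hZ1 ?_, hBU.trans hZ2, hZ⟩
  by_cases hvq : v = q
  exacts [hvq ▸ mem_insert q U1, mem_insert_of_mem q (hAU ⟨hv, hvq⟩)]

/-- The two sides `S = Q ∪ C` and `T = Q ∪ D` of a clique cutset `Q` separating `C` from `D`. -/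
structure IsCliqueSeparation (G : SimpleGraph V) (S T : Set V) : Prop where
  union_eq_univ : S ∪ T = univ
  isClique_inter : G.IsClique (S ∩ T)
  not_adj : ∀ ⦃x y⦄, x ∈ S \ T → y ∈ T \ S → ¬ G.Adj x y

namespace IsCliqueSeparation

variable {S T : Set V}

lemma symm (hsep : IsCliqueSeparation G S T) : IsCliqueSeparation G T S :=
  ⟨union_comm S T ▸ hsep.union_eq_univ, inter_comm S T ▸ hsep.isClique_inter,
    fun _ _ hx hy h => hsep.not_adj hy hx h.symm⟩

lemma mem_or_mem (hsep : IsCliqueSeparation G S T) (v : V) : v ∈ S ∨ v ∈ T :=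
  by rw [← mem_union, hsep.union_eq_univ]; trivial

lemma mem_left_of_adj (hsep : IsCliqueSeparation G S T) {x y : V} (hx : x ∈ S \ T)
    (hxy : G.Adj x y) : y ∈ S :=
  by_contra fun hy => hsep.not_adj hx ⟨(hsep.mem_or_mem y).resolve_left hy, hy⟩ hxy

lemma pair_subset_or (hsep : IsCliqueSeparation G S T) {a b : V} (hab : a = b ∨ G.Adj a b) :
    {a, b} ⊆ S ∨ {a, b} ⊆ T := by
  have ha := hsep.mem_or_mem a
  have hb := hsep.mem_or_mem b
  have hbS : a ∈ S → a ∉ T → b ∈ S := fun h h' =>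
    hab.elim (· ▸ h) (hsep.mem_left_of_adj ⟨h, h'⟩)
  have hbT : a ∈ T → a ∉ S → b ∈ T := fun h h' =>
    hab.elim (· ▸ h) (hsep.symm.mem_left_of_adj ⟨h, h'⟩)
  simp only [insert_subset_iff, singleton_subset_iff]
  tauto

lemma hole_subset_or (hsep : IsCliqueSeparation G S T) {H : Set V} (hH : IsHole G H) :
    H ⊆ S ∨ H ⊆ T := by
  obtain ⟨n, hn⟩ := hH
  by_contra! h
  obtain ⟨⟨x, hxH, hxS⟩, y, hyH, hyT⟩ := And.intro (not_subset.1 h.1) (not_subset.1 h.2)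
  obtain ⟨p⟩ := hn.preconnected_induce_diff hsep.isClique_inter
    (⟨y, hyH, fun h => hyT h.2⟩ : ↥(H \ (S ∩ T))) ⟨x, hxH, fun h => hxS h.1⟩
  obtain ⟨d, -, hdS, hdS'⟩ := p.exists_boundary_dart (Subtype.val ⁻¹' S)
    ((hsep.mem_or_mem y).resolve_right hyT) hxS
  exact hdS' (hsep.mem_left_of_adj ⟨hdS, fun hT => d.fst.2.2 ⟨hdS, hT⟩⟩ d.adj)

lemma chordalSet_union (hsep : IsCliqueSeparation G S T) {Z U : Set V} (hZ : ChordalSet G Z)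
    (hU : ChordalSet G U) (hZU : Z ∩ T ⊆ U) (hUZ : U ∩ S ⊆ Z) : ChordalSet G (Z ∪ U) := by
  intro H hHZU hH
  rcases hsep.hole_subset_or hH with hS | hT
  · exact hZ H (fun v hv => (hHZU hv).elim id fun hu => hUZ ⟨hu, hS hv⟩) hH
  · exact hU H (fun v hv => (hHZU hv).elim (fun hz => hZU ⟨hz, hT hv⟩) id) hH

lemma closedNbhd_inter (hsep : IsCliqueSeparation G S T) {P : Set V} {b : V} (hPS : P ⊆ S)
    (hb : b ∈ P ∩ T) : ClosedNbhd G P ∩ T = ClosedNbhd G (P ∩ T) ∩ T := by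
  refine Subset.antisymm (fun v ⟨hv, hvT⟩ => ⟨?_, hvT⟩)
    (inter_subset_inter_left T (closedNbhd_mono inter_subset_left))
  rcases hv with hvP | ⟨s, hsP, hvs⟩
  · exact Or.inl ⟨hvP, hvT⟩
  by_cases hsT : s ∈ T
  · exact Or.inr ⟨s, ⟨hsP, hsT⟩, hvs⟩
  have hvS : v ∈ S := hsep.mem_left_of_adj ⟨hPS hsP, hsT⟩ hvs.symm
  by_cases hvb : v = b
  · exact Or.inl (hvb ▸ hb)
  · exact Or.inr ⟨b, hb, hsep.isClique_inter ⟨hvS, hvT⟩ ⟨hPS hb.1, hb.2⟩ hvb⟩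

lemma closedNbhd_subset (hsep : IsCliqueSeparation G S T) {P : Set V} (hP : P ⊆ S \ T) :
    ClosedNbhd G P ⊆ S := by
  rintro v (hv | ⟨s, hs, hvs⟩)
  exacts [(hP hv).1, hsep.mem_left_of_adj (hP hs) hvs.symm]

lemma extendsToCover (hsep : IsCliqueSeparation G S T) {P W1 W2 Z1 Z2 U1 U2 : Set V}
    (hZ : IsChordalCover G S P W1 W2 Z1 Z2) (hU : IsChordalCover G T P W1 W2 U1 U2)
    (h1 : Z1 ∩ T = U1 ∩ S) (h2 : Z2 ∩ T = U2 ∩ S) (hP : P ⊆ W1 ∩ W2) :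
    ExtendsToCover G P W1 W2 := by
  have hW : ∀ {W Z U : Set V}, W ∩ S ⊆ Z → W ∩ T ⊆ U → W ⊆ Z ∪ U :=
    fun hZ hU w hw => (hsep.mem_or_mem w).elim (fun hS => Or.inl (hZ ⟨hw, hS⟩))
      fun hT => Or.inr (hU ⟨hw, hT⟩)
  have hWX1 := hW hZ.subset_left hU.subset_left
  have hWX2 := hW hZ.subset_right hU.subset_right
  refine ⟨Z1 ∪ U1, Z2 ∪ U2, hWX1, hWX2,
    hsep.chordalSet_union hZ.chordalSet_left hU.chordalSet_left
      (h1.subset.trans inter_subset_left) (h1.symm.subset.trans inter_subset_left),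
    hsep.chordalSet_union hZ.chordalSet_right hU.chordalSet_right
      (h2.subset.trans inter_subset_left) (h2.symm.subset.trans inter_subset_left),
    Subset.antisymm ?_ (hP.trans (inter_subset_inter hWX1 hWX2)), ?_⟩
  · rintro v ⟨hv1 | hv1, hv2 | hv2⟩
    · exact hZ.inter_subset ⟨hv1, hv2⟩
    · exact hU.inter_subset ⟨(h1.subset ⟨hv1, hU.right_subset hv2⟩).1, hv2⟩
    · exact hU.inter_subset ⟨hv1, (h2.subset ⟨hv2, hU.left_subset hv1⟩).1⟩
    · exact hU.inter_subset ⟨hv1, hv2⟩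
  · rw [union_union_union_comm, hZ.union_eq, hU.union_eq, hsep.union_eq_univ]

lemma exists_isChordalCover_of_meets (hsep : IsCliqueSeparation G S T)
    (hT : WeaklyFPE (G.induce T)) {a b : V} {W1 W2 : Set V} (hab : a = b ∨ G.Adj a b)
    (hPS : {a, b} ⊆ S) (hPT : ({a, b} ∩ T).Nonempty) (hc1 : ChordalSet G W1)
    (hc2 : ChordalSet G W2) (hint : W1 ∩ W2 = {a, b}) (huni : W1 ∪ W2 = ClosedNbhd G {a, b}) :
    ∃ U1 U2, IsChordalCover G T {a, b} W1 W2 U1 U2 := by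
  wlog hbT : b ∈ T generalizing a b
  · have haT : a ∈ T := by
      obtain ⟨c, rfl | rfl, hcT⟩ := hPT
      exacts [hcT, absurd hcT hbT]
    rw [pair_comm] at hPS hPT hint huni ⊢
    exact this (hab.imp Eq.symm Adj.symm) hPS hPT hint huni haT
  obtain ⟨c, hcb, hPc⟩ : ∃ c, (c = b ∨ G.Adj c b) ∧ {a, b} ∩ T = {c, b} := by
    by_cases haT : a ∈ T
    · exact ⟨a, hab, inter_eq_left.2 (pair_subset haT hbT)⟩
    · refine ⟨b, Or.inl rfl, ?_⟩
      rw [insert_inter_of_notMem haT, inter_eq_left.2 (singleton_subset_iff.2 hbT),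
        pair_eq_singleton]
  have hcT : c ∈ T := (hPc.symm.subset (mem_insert c _)).2
  obtain ⟨U1, U2, hU⟩ := hT.exists_isChordalCover hcT hbT hcb hc1 hc2 (by rw [hint, hPc])
    (by rw [huni, hsep.closedNbhd_inter hPS ⟨mem_insert_of_mem a rfl, hbT⟩, hPc])
  exact ⟨U1, U2, { hU with inter_subset := hU.inter_subset.trans (hPc ▸ inter_subset_left) }⟩

lemma exists_isChordalCover_of_disjoint [Finite V] (hsep : IsCliqueSeparation G S T)
    (hT : ∀ T' ⊆ T, WeaklyFPE (G.induce T')) {P W1 W2 Z1 Z2 : Set V} (hPS : P ⊆ S)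
    (hPT : Disjoint P T) (huni : W1 ∪ W2 = ClosedNbhd G P)
    (hZ : IsChordalCover G S P W1 W2 Z1 Z2) :
    ∃ U1 U2, IsChordalCover G T P W1 W2 U1 U2 ∧
      Z1 ∩ T = U1 ∩ S ∧ Z2 ∩ T = U2 ∩ S := by
  have hAB : Disjoint (Z1 ∩ T) (Z2 ∩ T) := Set.disjoint_left.2 fun v h1 h2 =>
    Set.disjoint_left.1 hPT (hZ.inter_subset ⟨h1.1, h2.1⟩) h1.2
  have hK : G.IsClique (Z1 ∩ T ∪ Z2 ∩ T) :=
    hsep.isClique_inter.subset (by rw [← union_inter_distrib_right, hZ.union_eq])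
  obtain ⟨U1, U2, hA, hB, hU12, hU, hc1, hc2⟩ :=
    exists_chordalSet_partition hT hAB hK inter_subset_right inter_subset_right
  have hWS : W1 ∪ W2 ⊆ S :=
    huni ▸ hsep.closedNbhd_subset fun p hp => ⟨hPS hp, Set.disjoint_left.1 hPT hp⟩
  have htrace : ∀ {Z Z' U U' : Set V}, Z ∪ Z' = S → U ∪ U' = T → Disjoint U U' →
      Z ∩ T ⊆ U → Z' ∩ T ⊆ U' → Z ∩ T = U ∩ S := by
    intro Z Z' U U' hZ hU hUU' hA hB
    refine Subset.antisymm (fun v hv => ⟨hA hv, hZ ▸ Or.inl hv.1⟩) fun v ⟨hvU, hvS⟩ => ?_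
    have hvT : v ∈ T := hU ▸ Or.inl hvU
    refine ⟨(hZ.symm ▸ hvS : v ∈ Z ∪ Z').resolve_right fun hvZ' => ?_, hvT⟩
    exact Set.disjoint_left.1 hUU' hvU (hB ⟨hvZ', hvT⟩)
  refine ⟨U1, U2, ⟨hc1, hc2, hU, ?_, ?_, ?_⟩, htrace hZ.union_eq hU hU12 hA hB,
    htrace (union_comm Z1 Z2 ▸ hZ.union_eq) (union_comm U1 U2 ▸ hU) hU12.symm hB hA⟩
  · rw [hU12.inter_eq]
    exact empty_subset P
  · exact fun v ⟨hvW, hvT⟩ => hA ⟨hZ.subset_left ⟨hvW, hWS (Or.inl hvW)⟩, hvT⟩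
  · exact fun v ⟨hvW, hvT⟩ => hB ⟨hZ.subset_right ⟨hvW, hWS (Or.inr hvW)⟩, hvT⟩

lemma extendsToCover_of_pair_subset [Finite V] (hsep : IsCliqueSeparation G S T)
    (hS : WeaklyFPE (G.induce S)) (hT : ∀ T' ⊆ T, WeaklyFPE (G.induce T')) {a b : V}
    {W1 W2 : Set V} (hab : a = b ∨ G.Adj a b) (hPS : {a, b} ⊆ S) (hc1 : ChordalSet G W1)
    (hc2 : ChordalSet G W2) (hint : W1 ∩ W2 = {a, b}) (huni : W1 ∪ W2 = ClosedNbhd G {a, b}) :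
    ExtendsToCover G {a, b} W1 W2 := by
  obtain ⟨Z1, Z2, hZ⟩ := hS.exists_isChordalCover (hPS (mem_insert a _))
    (hPS (mem_insert_of_mem a rfl)) hab hc1 hc2 (by rw [hint, inter_eq_left.2 hPS])
    (by rw [huni])
  have hPW : {a, b} ⊆ W1 ∩ W2 := hint.symm.subset
  rcases ({a, b} ∩ T).eq_empty_or_nonempty with hPT | hPT
  · obtain ⟨U1, U2, hU, h1, h2⟩ := hsep.exists_isChordalCover_of_disjoint hT hPS
      (disjoint_iff_inter_eq_empty.2 hPT) huni hZ
    exact hsep.extendsToCover hZ hU h1 h2 hPW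
  obtain ⟨U1, U2, hU⟩ :=
    hsep.exists_isChordalCover_of_meets (hT T subset_rfl) hab hPS hPT hc1 hc2 hint huni
  obtain ⟨c, hcP, hcT⟩ := hPT
  -- Both extensions agree with the precover on the clique `S ∩ T ⊆ N[P]`.
  have hST : S ∩ T ⊆ W1 ∪ W2 := fun v hv => huni ▸ by
    by_cases hvc : v = c
    · exact Or.inl (hvc ▸ hcP)
    · exact Or.inr ⟨c, hcP, hsep.isClique_inter hv ⟨hPS hcP, hcT⟩ hvc⟩
  refine hsep.extendsToCover hZ hU ?_ ?_ hPW
  · rw [hZ.inter_eq_inter hPW hST, hU.inter_eq_inter hPW (inter_comm S T ▸ hST),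
      inter_comm T S]
  · rw [inter_comm W1 W2] at hPW
    rw [union_comm W1 W2] at hST
    rw [hZ.symm.inter_eq_inter hPW hST, hU.symm.inter_eq_inter hPW (inter_comm S T ▸ hST),
      inter_comm T S]

theorem weaklyFPE [Finite V] (hsep : IsCliqueSeparation G S T)
    (hS : ∀ S' ⊆ S, WeaklyFPE (G.induce S')) (hT : ∀ T' ⊆ T, WeaklyFPE (G.induce T')) :
    WeaklyFPE G := by
  refine weaklyFPE_iff.2 fun a b hab W1 W2 hc1 hc2 hint huni => ?_
  rcases hsep.pair_subset_or hab with hPS | hPT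
  · exact hsep.extendsToCover_of_pair_subset (hS S subset_rfl) hT hab hPS hc1 hc2 hint huni
  · exact hsep.symm.extendsToCover_of_pair_subset (hT T subset_rfl) hS hab hPT hc1 hc2 hint
      huni

end IsCliqueSeparation

lemma IsCliqueCutset.exists_isCliqueSeparation {Q : Set V} (hQ : IsCliqueCutset G Q)
    (hQc : Qᶜ.Nonempty) : ∃ S T, IsCliqueSeparation G S T ∧ S ≠ univ ∧ T ≠ univ := by
  obtain ⟨hK, hQ⟩ := hQ
  have : Nonempty ↥Qᶜ := hQc.to_subtype
  obtain ⟨x, y, hxy⟩ : ∃ x y, ¬ (G.induce Qᶜ).Reachable x y := by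
    by_contra! h
    exact hQ ⟨h⟩
  set C : Set V := Subtype.val '' {z | (G.induce Qᶜ).Reachable x z}
  refine ⟨Q ∪ C, Cᶜ, ⟨?_, ?_, ?_⟩, fun h => ?_, fun h => ?_⟩
  · rw [union_assoc, union_compl_self, union_univ]
  · exact hK.subset fun v hv => hv.1.resolve_right hv.2
  · rintro u v ⟨-, hu⟩ ⟨hvC, hvS⟩ hadj
    obtain ⟨z, hz, rfl⟩ := not_notMem.1 hu
    exact hvC ⟨⟨v, fun h => hvS (Or.inl h)⟩, hz.trans (Adj.reachable hadj), rfl⟩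
  · rcases h ▸ mem_univ y.val with hyQ | ⟨z, hz, hzy⟩
    exacts [y.2 hyQ, hxy (Subtype.ext hzy ▸ hz)]
  · exact (h ▸ mem_univ x.val : x.val ∈ Cᶜ) ⟨x, Reachable.refl x, rfl⟩

/-- A minimal non-weakly FPE graph has no clique cutset. -/
theorem stmt13 {V : Type u} [Finite V] (G : SimpleGraph V)
    (hG : MinNonWeaklyFPE G) :
    ∀ Q : Set V, ¬ IsCliqueCutset G Q := by
  intro Q hQ
  refine hG.1 ?_
  rcases Qᶜ.eq_empty_or_nonempty with hQc | hQc
  · exact weaklyFPE_of_isClique_univ (compl_empty_iff.1 hQc ▸ hQ.1)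
  obtain ⟨S, T, hsep, hS, hT⟩ := hQ.exists_isCliqueSeparation hQc
  exact hsep.weaklyFPE (fun S' h => hG.2 S' fun h' => hS (univ_subset_iff.1 (h' ▸ h)))
    (fun T' h => hG.2 T' fun h' => hT (univ_subset_iff.1 (h' ▸ h)))
end

section
/- Let G be a minimal non-weakly flat path extendable graph and let v ∈ V(G). Then v is not complete to G \ {v}, i.e., v is not adjacent to every other vertex of G. -/
open Classical

universe u

section Aux

variable {V : Type u}

/-- A hole cannot pass through a universal vertex. -/
lemma no_hole_through_universal (G : SimpleGraph V) (v : V)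
    (hv : ∀ u : V, u ≠ v → G.Adj v u) {n : ℕ} {H : Set V}
    (h : IsHoleOn G n H) : v ∉ H := by
  obtain ⟨hn, f, hinj, hrange, hadj⟩ := h
  intro hvH
  rw [← hrange] at hvH
  obtain ⟨i, hi⟩ := hvH
  haveI : NeZero n := ⟨by omega⟩
  have hk : ∀ k : ℕ, 0 < k → k < 4 → ((k : ℕ) : ZMod n) ≠ 0 := by
    intro k hk0 hk4 h0
    have := (ZMod.natCast_eq_zero_iff k n).mp h0
    have := Nat.le_of_dvd hk0 this
    omega
  have h1 : (1 : ZMod n) ≠ 0 := by simpa using hk 1 (by norm_num) (by norm_num)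
  have h2 : (2 : ZMod n) ≠ 0 := by simpa using hk 2 (by norm_num) (by norm_num)
  have h3 : (3 : ZMod n) ≠ 0 := by simpa using hk 3 (by norm_num) (by norm_num)
  have hne : f (i + 2) ≠ f i := by
    intro h
    have := hinj h
    exact h2 (by rwa [add_eq_left] at this)
  have hadj' : G.Adj (f i) (f (i + 2)) := by
    rw [hi]; exact hv _ (by rw [hi] at hne; exact hne)
  rcases (hadj i (i + 2)).mp hadj' with h' | h'
  · exact h1 (by linear_combination (add_left_cancel h' : (2 : ZMod n) = 1))
  · exact h3 (by linear_combination -h')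

/-- Transfer a hole of an induced subgraph to the ambient graph. -/
lemma isHoleOn_of_induce (G : SimpleGraph V) (S : Set V) {n : ℕ} {H' : Set ↥S}
    (h : IsHoleOn (G.induce S) n H') : IsHoleOn G n (Subtype.val '' H') := by
  obtain ⟨hn, f, hinj, hrange, hadj⟩ := h
  refine ⟨hn, Subtype.val ∘ f, Subtype.val_injective.comp hinj, ?_, ?_⟩
  · rw [Set.range_comp, hrange]
  · intro i j
    simpa using hadj i j

/-- Transfer a hole of the ambient graph contained in `S` to the induced subgraph. -/
lemma isHoleOn_restrict (G : SimpleGraph V) (S : Set V) {n : ℕ} {H : Set V}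
    (hHS : H ⊆ S) (h : IsHoleOn G n H) :
    IsHoleOn (G.induce S) n {x : ↥S | x.val ∈ H} := by
  obtain ⟨hn, f, hinj, hrange, hadj⟩ := h
  have hfS : ∀ i, f i ∈ S := fun i => hHS (hrange ▸ Set.mem_range_self i)
  refine ⟨hn, fun i => ⟨f i, hfS i⟩, fun i j hij => hinj (congrArg Subtype.val hij), ?_, ?_⟩
  · ext x
    simp only [Set.mem_range, Set.mem_setOf_eq, ← hrange]
    constructor
    · rintro ⟨i, rfl⟩; exact ⟨i, rfl⟩
    · rintro ⟨i, hi⟩; exact ⟨i, Subtype.ext hi⟩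
  · intro i j
    simpa using hadj i j

lemma chordalSet_induce_of (G : SimpleGraph V) (S : Set V) {X : Set V}
    (h : ChordalSet G X) : ChordalSet (G.induce S) {x : ↥S | x.val ∈ X} := by
  intro H' hH' ⟨n, hn⟩
  refine h (Subtype.val '' H') ?_ ⟨n, isHoleOn_of_induce G S hn⟩
  rintro _ ⟨x, hx, rfl⟩
  exact hH' hx

lemma chordalSet_of_induce (G : SimpleGraph V) (S : Set V) {X' : Set ↥S}
    (h : ChordalSet (G.induce S) X') : ChordalSet G (Subtype.val '' X') := by
  intro H hH ⟨n, hn⟩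
  have hHS : H ⊆ S := hH.trans (by rintro _ ⟨x, _, rfl⟩; exact x.2)
  refine h {x : ↥S | x.val ∈ H} ?_ ⟨n, isHoleOn_restrict G S hHS hn⟩
  intro x hx
  obtain ⟨y, hy, hyx⟩ := hH hx
  rwa [← Subtype.ext hyx.symm] at hy

lemma inducedPath_restrict (G : SimpleGraph V) (S : Set V) {l : List V}
    (hS : ∀ a ∈ l, a ∈ S) (h : IsInducedPathList G l) :
    IsInducedPathList (G.induce S) (l.pmap (fun a ha => (⟨a, ha⟩ : ↥S)) hS) := by
  obtain ⟨hne, hnd, hadj⟩ := h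
  refine ⟨by simpa using hne, ?_, ?_⟩
  · exact hnd.pmap (fun a ha b hb hab => congrArg Subtype.val hab)
  · intro i j hi hj
    rw [List.get_eq_getElem, List.get_eq_getElem, List.getElem_pmap, List.getElem_pmap]
    simpa using hadj i j (by simpa using hi) (by simpa using hj)

/-- Key step: extend a precover when the universal vertex `v` avoids the path
and lies in `W1` but not `W2`. -/
lemma key_extend (G : SimpleGraph V) (v : V)
    (hv : ∀ u : V, u ≠ v → G.Adj v u)
    (hmin : ∀ S : Set V, S ≠ Set.univ → WeaklyFPE (G.induce S))
    (l : List V) (hl : IsInducedPathList G l) (hlen : l.length ≤ 2)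
    (hvl : v ∉ l) (W1 W2 : Set V)
    (hW1 : ChordalSet G W1) (hW2 : ChordalSet G W2)
    (hint : W1 ∩ W2 = {w | w ∈ l}) (hun : W1 ∪ W2 = ClosedNbhd G {w | w ∈ l})
    (hv2 : v ∉ W2) : ExtendsToCover G {w | w ∈ l} W1 W2 := by
  set S : Set V := {v}ᶜ with hSdef
  have hvS : v ∉ S := by simp [hSdef]
  have hSne : S ≠ Set.univ := fun h => hvS (h ▸ Set.mem_univ v)
  have hS : ∀ a ∈ l, a ∈ S := fun a ha => by
    simp only [hSdef, Set.mem_compl_iff, Set.mem_singleton_iff]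
    rintro rfl; exact hvl ha
  set l' : List ↥S := l.pmap (fun a ha => (⟨a, ha⟩ : ↥S)) hS with hl'def
  have hmem' : ∀ x : ↥S, x ∈ l' ↔ x.val ∈ l := by
    intro x
    rw [hl'def, List.mem_pmap]
    constructor
    · rintro ⟨a, ha, rfl⟩; exact ha
    · intro hx; exact ⟨x.val, hx, Subtype.ext rfl⟩
  set W1' : Set ↥S := {x : ↥S | x.val ∈ W1} with hW1'def
  set W2' : Set ↥S := {x : ↥S | x.val ∈ W2} with hW2'def
  have hint' : W1' ∩ W2' = {x | x ∈ l'} := by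
    ext x
    have : x.val ∈ W1 ∩ W2 ↔ x.val ∈ l := by rw [hint]; rfl
    simp only [hW1'def, hW2'def, Set.mem_inter_iff, Set.mem_setOf_eq, hmem' x]
    exact this
  have hun' : W1' ∪ W2' = ClosedNbhd (G.induce S) {x | x ∈ l'} := by
    ext x
    have hx1 : x.val ∈ W1 ∪ W2 ↔ x.val ∈ ClosedNbhd G {w | w ∈ l} := by rw [hun]
    simp only [hW1'def, hW2'def, Set.mem_union, Set.mem_setOf_eq] at hx1 ⊢
    rw [hx1]
    unfold ClosedNbhd
    simp only [Set.mem_union, Set.mem_setOf_eq, hmem' x]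
    constructor
    · rintro (h | ⟨s, hs, hadj⟩)
      · exact Or.inl h
      · exact Or.inr ⟨⟨s, hS s hs⟩, (hmem' _).mpr hs, by simpa using hadj⟩
    · rintro (h | ⟨s, hs, hadj⟩)
      · exact Or.inl h
      · exact Or.inr ⟨s.val, (hmem' s).mp hs, by simpa using hadj⟩
  obtain ⟨X1', X2', hs1, hs2, hc1, hc2, hi', hu'⟩ :=
    hmin S hSne l' (inducedPath_restrict G S hS hl) (by simpa [hl'def] using hlen)
      W1' W2' (chordalSet_induce_of G S hW1) (chordalSet_induce_of G S hW2) hint' hun'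
  refine ⟨Subtype.val '' X1' ∪ {v}, Subtype.val '' X2', ?_, ?_, ?_, ?_, ?_, ?_⟩
  · intro w hw
    by_cases hwv : w = v
    · exact Or.inr hwv
    · have hwS : w ∈ S := by simp [hSdef, hwv]
      exact Or.inl ⟨⟨w, hwS⟩, hs1 hw, rfl⟩
  · intro w hw
    have hwv : w ≠ v := fun h => hv2 (h ▸ hw)
    have hwS : w ∈ S := by simp [hSdef, hwv]
    exact ⟨⟨w, hwS⟩, hs2 hw, rfl⟩
  · intro H hH hhole
    obtain ⟨n, hn⟩ := hhole
    have hvH : v ∉ H := no_hole_through_universal G v hv hn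
    have hH' : H ⊆ Subtype.val '' X1' := by
      intro w hw
      rcases hH hw with h | h
      · exact h
      · exact absurd hw (by rw [Set.eq_of_mem_singleton h]; exact hvH)
    exact chordalSet_of_induce G S hc1 H hH' ⟨n, hn⟩
  · exact chordalSet_of_induce G S hc2
  · ext w
    simp only [Set.mem_inter_iff, Set.mem_union, Set.mem_image, Set.mem_singleton_iff,
      Set.mem_setOf_eq]
    constructor
    · rintro ⟨h1, x2, hx2, rfl⟩
      rcases h1 with ⟨x1, hx1, hx⟩ | h
      · have : x1 = x2 := Subtype.ext hx
        rw [this] at hx1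
        have : x2 ∈ X1' ∩ X2' := ⟨hx1, hx2⟩
        rw [hi'] at this
        exact (hmem' x2).mp this
      · exact absurd (h ▸ x2.2) hvS
    · intro hw
      have hwS : w ∈ S := hS w hw
      have : (⟨w, hwS⟩ : ↥S) ∈ X1' ∩ X2' := by
        rw [hi']; exact (hmem' _).mpr hw
      exact ⟨Or.inl ⟨_, this.1, rfl⟩, _, this.2, rfl⟩
  · ext w
    simp only [Set.mem_union, Set.mem_image, Set.mem_singleton_iff, Set.mem_univ, iff_true]
    by_cases hwv : w = v
    · exact Or.inl (Or.inr hwv)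
    · have hwS : w ∈ S := by simp [hSdef, hwv]
      have : (⟨w, hwS⟩ : ↥S) ∈ X1' ∪ X2' := by rw [hu']; trivial
      rcases this with h | h
      · exact Or.inl (Or.inl ⟨_, h, rfl⟩)
      · exact Or.inr ⟨_, h, rfl⟩

end Aux

/-- In a minimal non-weakly FPE graph, no vertex is complete to all the other vertices. -/
theorem stmt14 {V : Type u} [Finite V] (G : SimpleGraph V)
    (hG : MinNonWeaklyFPE G) (v : V) :
    ¬ (∀ u : V, u ≠ v → G.Adj v u) := by
  intro hv
  obtain ⟨hnot, hmin⟩ := hG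
  apply hnot
  intro l hl hlen W1 W2 hW1 hW2 hint hun
  by_cases hvl : v ∈ l
  · refine ⟨W1, W2, subset_rfl, subset_rfl, hW1, hW2, hint, ?_⟩
    rw [hun]
    ext u
    simp only [Set.mem_univ, iff_true]
    by_cases huv : u = v
    · exact Or.inl (huv ▸ hvl)
    · exact Or.inr ⟨v, hvl, (hv u huv).symm⟩
  · have hvN : v ∈ W1 ∪ W2 := by
      rw [hun]
      obtain ⟨a, ha⟩ := List.exists_mem_of_ne_nil l hl.1
      have hav : a ≠ v := fun h => hvl (h ▸ ha)
      exact Or.inr ⟨a, ha, hv a hav⟩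
    have hvnl : v ∉ W1 ∩ W2 := by rw [hint]; exact hvl
    rcases hvN with hv1 | hv2
    · have hv2 : v ∉ W2 := fun h => hvnl ⟨hv1, h⟩
      exact key_extend G v hv hmin l hl hlen hvl W1 W2 hW1 hW2 hint hun hv2
    · have hv1 : v ∉ W1 := fun h => hvnl ⟨h, hv2⟩
      obtain ⟨X2, X1, h2, h1, hc2, hc1, hi, hu⟩ :=
        key_extend G v hv hmin l hl hlen hvl W2 W1 hW2 hW1
          (by rw [Set.inter_comm]; exact hint) (by rw [Set.union_comm]; exact hun) hv1
      exact ⟨X1, X2, h1, h2, hc1, hc2, by rw [Set.inter_comm]; exact hi,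
        by rw [Set.union_comm]; exact hu⟩
end

section
/- Let G be a graph with no even hole. Then G does not contain an even wheel, i.e., there is no hole H of G and vertex v ∈ V(G) \ V(H) such that |N(v) ∩ V(H)| is even and at least 4. -/
open Classical

universe u

lemma natCast_zmod_inj' {n x y : ℕ} (hx : x < n) (hy : y < n)
    (h : (x : ZMod n) = y) : x = y := by
  haveI : NeZero n := ⟨by omega⟩
  have h2 := congrArg ZMod.val h
  rwa [ZMod.val_cast_of_lt hx, ZMod.val_cast_of_lt hy] at h2

lemma gap_odd {V : Type u} (G : SimpleGraph V) (hEH : EvenHoleFree G)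
    {n : ℕ} (f : ZMod n → V) (hinj : Function.Injective f)
    (hadj : ∀ i j, G.Adj (f i) (f j) ↔ (j = i + 1 ∨ i = j + 1))
    (v : V) (hv : ∀ i, v ≠ f i)
    (a d : ℕ) (hd1 : 1 ≤ d) (hdn : d + 2 ≤ n)
    (ha : G.Adj v (f (a : ℕ))) (hb : G.Adj v (f ((a + d : ℕ) : ZMod n)))
    (hmid : ∀ s : ℕ, 0 < s → s < d → ¬ G.Adj v (f ((a + s : ℕ) : ZMod n))) :
    Odd d := by
  rw [Nat.odd_iff]
  by_contra hpar
  have hd2 : 2 ≤ d := by omega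
  set m := d + 2 with hm
  haveI : NeZero m := ⟨by omega⟩
  haveI : Fact (1 < m) := ⟨by omega⟩
  -- adjacency between sector vertices
  have factB : ∀ x y : ℕ, x ≤ d → y ≤ d →
      (G.Adj (f ((a + x : ℕ) : ZMod n)) (f ((a + y : ℕ) : ZMod n)) ↔
        (y = x + 1 ∨ x = y + 1)) := by
    intro x y hx hy
    rw [hadj]
    have key : ∀ x y : ℕ, x ≤ d → y ≤ d →
        ((((a + y : ℕ) : ZMod n) = ((a + x : ℕ) : ZMod n) + 1) ↔ y = x + 1) := by
      intro x y hx hy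
      constructor
      · intro h
        have h2 : ((y : ℕ) : ZMod n) = ((x + 1 : ℕ) : ZMod n) := by
          push_cast at h ⊢
          linear_combination h
        exact natCast_zmod_inj' (by omega) (by omega) h2
      · rintro rfl; push_cast; ring
    rw [key x y hx hy, key y x hy hx]
  -- adjacency to the hub
  have factC : ∀ x : ℕ, x ≤ d → (G.Adj v (f ((a + x : ℕ) : ZMod n)) ↔ (x = 0 ∨ x = d)) := by
    intro x hx
    constructor
    · intro h
      by_contra hcon
      push_neg at hcon
      exact hmid x (by omega) (by omega) h
    · rintro (rfl | rfl)
      · simpa using ha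
      · exact hb
  set g : ZMod m → V := fun i => if i.val = 0 then v else f ((a + (i.val - 1) : ℕ) : ZMod n)
    with hg
  have hvalsucc : ∀ i j : ZMod m, j = i + 1 ↔ j.val = (i.val + 1) % m := by
    intro i j
    rw [show (i.val + 1) % m = (i + 1).val by rw [ZMod.val_add, ZMod.val_one]]
    exact ⟨fun h => by rw [h], fun h => ZMod.val_injective m h⟩
  have hsuccmod : ∀ p : ℕ, p < m → (p + 1) % m = if p + 1 = m then 0 else p + 1 := by
    intro p hp
    rcases Nat.lt_or_ge (p + 1) m with h | h
    · rw [if_neg (by omega), Nat.mod_eq_of_lt h]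
    · have hpm : p + 1 = m := by omega
      rw [if_pos hpm, hpm, Nat.mod_self]
  -- injectivity
  have hginj : Function.Injective g := by
    intro i j hij
    have hiv : i.val < m := ZMod.val_lt i
    have hjv : j.val < m := ZMod.val_lt j
    by_cases hi0 : i.val = 0 <;> by_cases hj0 : j.val = 0
    · exact ZMod.val_injective m (hi0.trans hj0.symm)
    · simp only [hg, if_pos hi0, if_neg hj0] at hij
      exact absurd hij (hv _)
    · simp only [hg, if_pos hj0, if_neg hi0] at hij
      exact absurd hij.symm (hv _)
    · simp only [hg, if_neg hi0, if_neg hj0] at hij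
      obtain ⟨x, hx⟩ : ∃ x, i.val = x + 1 := ⟨i.val - 1, by omega⟩
      obtain ⟨y, hy⟩ : ∃ y, j.val = y + 1 := ⟨j.val - 1, by omega⟩
      rw [show i.val - 1 = x by omega, show j.val - 1 = y by omega] at hij
      have h2 := hinj hij
      have h3 : ((x : ℕ) : ZMod n) = ((y : ℕ) : ZMod n) := by
        push_cast at h2 ⊢
        linear_combination h2
      have : x = y := natCast_zmod_inj' (by omega) (by omega) h3
      exact ZMod.val_injective m (by omega)
  -- adjacency
  have hgadj : ∀ i j : ZMod m, G.Adj (g i) (g j) ↔ (j = i + 1 ∨ i = j + 1) := by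
    intro i j
    have hiv : i.val < m := ZMod.val_lt i
    have hjv : j.val < m := ZMod.val_lt j
    rw [hvalsucc i j, hvalsucc j i, hsuccmod i.val hiv, hsuccmod j.val hjv]
    by_cases hi0 : i.val = 0 <;> by_cases hj0 : j.val = 0
    · simp only [hg, if_pos hi0, if_pos hj0, SimpleGraph.irrefl, false_iff]
      rintro (h | h) <;> (split at h <;> omega)
    · simp only [hg, if_pos hi0, if_neg hj0]
      rw [factC (j.val - 1) (by omega)]
      constructor
      · intro h
        rcases h with h | h
        · left; split <;> omega
        · right; split <;> omega
      · intro h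
        rcases h with h | h
        · left; split at h <;> omega
        · right; split at h <;> omega
    · rw [show G.Adj (g i) (g j) ↔ G.Adj (g j) (g i) from ⟨SimpleGraph.Adj.symm, SimpleGraph.Adj.symm⟩]
      simp only [hg, if_pos hj0, if_neg hi0]
      rw [factC (i.val - 1) (by omega)]
      constructor
      · intro h
        rcases h with h | h
        · right; split <;> omega
        · left; split <;> omega
      · intro h
        rcases h with h | h
        · right; split at h <;> omega
        · left; split at h <;> omega
    · simp only [hg, if_neg hi0, if_neg hj0]
      rw [factB (i.val - 1) (j.val - 1) (by omega) (by omega)]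
      constructor
      · intro h
        rcases h with h | h
        · left; split <;> omega
        · right; split <;> omega
      · intro h
        rcases h with h | h
        · left; split at h <;> omega
        · right; split at h <;> omega
  have hhole : IsHoleOn G m (Set.range g) := ⟨by omega, g, hginj, rfl, hgadj⟩
  exact hEH m (Set.range g) hhole (by rw [Nat.even_iff]; omega)


/-- A graph with no even hole contains no even wheel. -/
theorem stmt15 {V : Type u} [Finite V] (G : SimpleGraph V)
    (hEH : EvenHoleFree G) :
    ¬ ∃ (H : Set V) (v : V), IsHole G H ∧ v ∉ H ∧
      Even ((H ∩ {u | G.Adj v u}).ncard) ∧ 4 ≤ (H ∩ {u | G.Adj v u}).ncard := by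
  rintro ⟨H, v, ⟨n, hn4, f, hinj, hrange, hadj⟩, hvH, heven, hk4⟩
  classical
  haveI : NeZero n := ⟨by omega⟩
  set k := (H ∩ {u | G.Adj v u}).ncard with hkdef
  have hv : ∀ i, v ≠ f i := by
    intro i h
    exact hvH (hrange ▸ Set.mem_range.2 ⟨i, h.symm⟩)
  have hSne : (H ∩ {u | G.Adj v u}).Nonempty := by
    rcases Set.eq_empty_or_nonempty (H ∩ {u | G.Adj v u}) with h | h
    · rw [hkdef, h, Set.ncard_empty] at hk4; omega
    · exact h
  obtain ⟨u0, hu0H, hu0adj⟩ := hSne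
  obtain ⟨i₀, hi₀⟩ : ∃ i, f i = u0 := by rw [← hrange] at hu0H; exact hu0H
  set f' : ZMod n → V := fun i => f (i + i₀) with hf'
  have hinj' : Function.Injective f' := by
    intro i j h
    exact add_right_cancel (hinj h)
  have hshift : ∀ i j : ZMod n, (j + i₀ = i + i₀ + 1) ↔ (j = i + 1) := by
    intro i j
    rw [show i + i₀ + 1 = (i + 1) + i₀ by ring, add_left_inj]
  have hadj' : ∀ i j, G.Adj (f' i) (f' j) ↔ (j = i + 1 ∨ i = j + 1) := by
    intro i j
    simp only [hf']
    rw [hadj, hshift, hshift]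
  have hrange' : Set.range f' = H := by
    rw [← hrange]
    ext u
    constructor
    · rintro ⟨i, rfl⟩; exact ⟨i + i₀, rfl⟩
    · rintro ⟨i, rfl⟩; exact ⟨i - i₀, by simp [hf']⟩
  have hv' : ∀ i, v ≠ f' i := fun i => hv _
  set A : Finset (ZMod n) := Finset.univ.filter (fun i => G.Adj v (f' i)) with hA
  have hAmem : ∀ i, i ∈ A ↔ G.Adj v (f' i) := by intro i; simp [hA]
  have hAcard : A.card = k := by
    have h1 : H ∩ {u | G.Adj v u} = f' '' (A : Set (ZMod n)) := by
      ext u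
      constructor
      · rintro ⟨huH, hadjv⟩
        rw [← hrange'] at huH
        obtain ⟨i, rfl⟩ := huH
        exact ⟨i, by simpa [hAmem] using hadjv, rfl⟩
      · rintro ⟨i, hi, rfl⟩
        refine ⟨hrange' ▸ ⟨i, rfl⟩, ?_⟩
        simpa [hAmem] using hi
    rw [hkdef, h1, Set.ncard_image_of_injective _ hinj', Set.ncard_coe_finset]
  set B : Finset ℕ := A.image ZMod.val with hB
  have hBcard : B.card = k := by
    rw [hB, Finset.card_image_of_injective _ (ZMod.val_injective n), hAcard]
  have hBlt : ∀ b ∈ B, b < n := by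
    intro b hb
    rw [hB, Finset.mem_image] at hb
    obtain ⟨i, _, rfl⟩ := hb
    exact ZMod.val_lt i
  have hBmem : ∀ x : ℕ, x < n → (x ∈ B ↔ G.Adj v (f' (x : ZMod n))) := by
    intro x hx
    rw [hB, Finset.mem_image]
    constructor
    · rintro ⟨i, hi, rfl⟩
      rw [ZMod.natCast_rightInverse i]
      exact (hAmem i).1 hi
    · intro h
      exact ⟨(x : ZMod n), (hAmem _).2 h, ZMod.val_cast_of_lt hx⟩
  have h0B : (0 : ℕ) ∈ B := by
    rw [hBmem 0 (by omega)]
    have h2 : f' ((0:ℕ) : ZMod n) = u0 := by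
      rw [Nat.cast_zero]
      simp [hf', hi₀]
    rw [h2]
    exact hu0adj
  set e : Fin k ↪o ℕ := B.orderEmbOfFin hBcard with he
  have hemem : ∀ t : Fin k, e t ∈ B := fun t => B.orderEmbOfFin_mem hBcard t
  have hesurj : ∀ b ∈ B, ∃ t : Fin k, e t = b := by
    intro b hb
    have h2 : (b : ℕ) ∈ Set.range e := by
      rw [he, Finset.range_orderEmbOfFin]
      exact_mod_cast hb
    exact h2
  set g : ℕ → ℕ := fun j => if h : j < k then e ⟨j, h⟩ else n with hgdef
  have hgval : ∀ j (h : j < k), g j = e ⟨j, h⟩ := by intro j h; simp [hgdef, h]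
  have hgmemB : ∀ j (h : j < k), g j ∈ B := by intro j h; rw [hgval j h]; exact hemem _
  have hgltn : ∀ j, j < k → g j < n := fun j h => hBlt _ (hgmemB j h)
  have hgk : g k = n := by simp [hgdef]
  have hgmono : ∀ j1 j2, j1 < j2 → j2 ≤ k → g j1 < g j2 := by
    intro j1 j2 h12 h2k
    have h1 : j1 < k := by omega
    rcases lt_or_eq_of_le h2k with h2 | h2
    · rw [hgval j1 h1, hgval j2 h2]
      exact e.strictMono (Fin.mk_lt_mk.2 h12)
    · rw [h2, hgk]
      exact hgltn j1 h1
  have hg0 : g 0 = 0 := by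
    have hk0 : 0 < k := by omega
    obtain ⟨t, ht⟩ := hesurj 0 h0B
    have h2 : e ⟨0, hk0⟩ ≤ e t := e.monotone (Fin.le_def.2 (Nat.zero_le _))
    rw [ht] at h2
    rw [hgval 0 hk0]
    omega
  have hbetween : ∀ j, j + 1 ≤ k → ∀ s ∈ B, g j < s → s < g (j+1) → False := by
    intro j hjk s hs h1 h2
    obtain ⟨t, rfl⟩ := hesurj s hs
    have hj : j < k := by omega
    rw [hgval j hj] at h1
    have hjt : j < t.val := Fin.lt_def.1 (e.lt_iff_lt.1 h1)
    rcases lt_or_eq_of_le hjk with hjk' | hjk'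
    · rw [hgval (j+1) hjk'] at h2
      have h3 : t.val < j + 1 := Fin.lt_def.1 (e.lt_iff_lt.1 h2)
      omega
    · have h3 : t.val < k := t.isLt
      omega
  set d : ℕ → ℕ := fun j => g (j+1) - g j with hd
  have hgle : ∀ j, j < k → g j < g (j+1) := fun j h => hgmono j (j+1) (by omega) (by omega)
  have hdpos : ∀ j, j < k → 1 ≤ d j := by
    intro j h
    have h2 := hgle j h
    simp only [hd]
    omega
  have hsum : ∀ j, j ≤ k → ∑ i ∈ Finset.range j, d i = g j := by
    intro j
    induction j with
    | zero => intro _; simpa using hg0.symm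
    | succ j ih =>
      intro hjk
      rw [Finset.sum_range_succ, ih (by omega)]
      have h2 := hgle j (by omega)
      simp only [hd]
      omega
  have hsumk : ∑ i ∈ Finset.range k, d i = n := by rw [hsum k le_rfl, hgk]
  have hbound : ∀ j, j < k → d j + 2 ≤ n := by
    intro j hj
    have h1 : ∑ i ∈ (Finset.range k).erase j, d i + d j = ∑ i ∈ Finset.range k, d i :=
      Finset.sum_erase_add _ _ (Finset.mem_range.2 hj)
    have h2 : ((Finset.range k).erase j).card ≤ ∑ i ∈ (Finset.range k).erase j, d i := by
      calc ((Finset.range k).erase j).card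
          = ∑ _i ∈ (Finset.range k).erase j, 1 := by simp
        _ ≤ ∑ i ∈ (Finset.range k).erase j, d i := by
            apply Finset.sum_le_sum
            intro i hi
            exact hdpos i (Finset.mem_range.1 (Finset.mem_of_mem_erase hi))
    have h3 : ((Finset.range k).erase j).card = k - 1 := by
      rw [Finset.card_erase_of_mem (Finset.mem_range.2 hj), Finset.card_range]
    omega
  have hodd : ∀ j, j < k → Odd (d j) := by
    intro j hj
    have hab : g j + d j = g (j+1) := by
      have h2 := hgle j hj
      simp only [hd]
      omega
    apply gap_odd G hEH f' hinj' hadj' v hv' (g j) (d j) (hdpos j hj) (hbound j hj)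
    · rw [← hBmem _ (hgltn j hj)]
      exact hgmemB j hj
    · rw [hab]
      rcases lt_or_eq_of_le (show j + 1 ≤ k by omega) with h | h
      · rw [← hBmem _ (hgltn _ h)]
        exact hgmemB _ h
      · rw [h, hgk]
        have h2 : ((n : ℕ) : ZMod n) = ((0:ℕ) : ZMod n) := by
          simp
        rw [h2, ← hBmem 0 (by omega)]
        exact h0B
    · intro s hs1 hs2 hadjs
      have hlt : g j + s < g (j + 1) := by
        have h2 := hab
        simp only [hd] at hs2
        omega
      have hltn : g j + s < n := by
        have h2 : g (j+1) ≤ n := by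
          rcases lt_or_eq_of_le (show j + 1 ≤ k by omega) with h | h
          · exact le_of_lt (hgltn _ h)
          · rw [h, hgk]
        omega
      have hmem : g j + s ∈ B := (hBmem _ hltn).2 hadjs
      exact hbetween j (by omega) _ hmem (by omega) hlt
  have hmod : ∀ j ∈ Finset.range k, d j % 2 = 1 % 2 := by
    intro j hj
    have := Nat.odd_iff.1 (hodd j (Finset.mem_range.1 hj))
    omega
  have hn2 : n % 2 = k % 2 := by
    conv_lhs => rw [← hsumk]
    rw [Finset.sum_nat_mod, Finset.sum_congr rfl hmod, ← Finset.sum_nat_mod]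
    simp
  have hkeven : k % 2 = 0 := Nat.even_iff.1 heven
  exact hEH n H ⟨hn4, f, hinj, hrange, hadj⟩ (Nat.even_iff.2 (by omega))
end
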